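/- arXiv:1809.02221 — 8 statements merged into one kernel-verified Lean document; each statement's English description precedes it below -/
import Mathlib

section
/- Let α > 1, τ₀ ≥ 1, and σ_{n+1} = τ_{n+1} - τ_n > 0 with τ_n nondecreasing. If the series ∑_{n≥0} σ_{n+1}/τ_n^α converges, then limsup_{n→∞} α^{-n} log τ_n < ∞. -/
/-! Summability forces `τ (n+1) - τ n < τ n ^ α` eventually, hence `τ (n+1) ≤ 2 τ n ^ α`, i.e.
`log τ (n+1) ≤ α log τ n + log 2`. Any sequence obeying such an affine recursion with slope
`α > 1` grows at most like a constant times `α ^ n`. -/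

open Filter Real

theorem exists_div_pow_le_of_le_mul_add {u : ℕ → ℝ} {a b : ℝ} (ha : 1 < a) (hb : 0 ≤ b)
    (h : ∀ᶠ n in atTop, u (n + 1) ≤ a * u n + b) :
    ∃ C : ℝ, ∀ᶠ n in atTop, u n / a ^ n ≤ C := by
  obtain ⟨k, hk⟩ := eventually_atTop.1 h
  -- shifting by the fixed point `-b / (a - 1)` of `x ↦ a x + b` makes the recursion linear
  set v : ℕ → ℝ := fun n => u n + b / (a - 1) with hv
  have hstep : ∀ n, k ≤ n → v (n + 1) ≤ a * v n := by
    intro n hn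
    have hfix : b + b / (a - 1) = a * (b / (a - 1)) := by
      field_simp [(sub_pos.2 ha).ne']
      ring
    simp only [hv]
    linarith [hk n hn]
  have hgeom : ∀ m, v (k + m) ≤ a ^ m * v k :=
    fun m => le_geom (u := fun m => v (k + m)) (by linarith) m
      fun i _ => hstep (k + i) (Nat.le_add_right k i)
  refine ⟨v k / a ^ k, eventually_atTop.2 ⟨k, fun n hn => ?_⟩⟩
  obtain ⟨m, rfl⟩ := Nat.exists_eq_add_of_le hn
  have ha0 : 0 < a := by linarith
  rw [div_le_div_iff₀ (by positivity) (by positivity)]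
  calc u (k + m) * a ^ k ≤ v (k + m) * a ^ k := by
        gcongr
        exact le_add_of_nonneg_right (div_nonneg hb (by linarith))
    _ ≤ a ^ m * v k * a ^ k := by gcongr; exact hgeom m
    _ = v k * a ^ (k + m) := by rw [pow_add]; ring

theorem le_two_mul_rpow_of_sub_lt_rpow {x y α : ℝ} (hx : 1 ≤ x) (hα : 1 ≤ α)
    (h : y - x < x ^ α) : y ≤ 2 * x ^ α := by
  linarith [self_le_rpow_of_one_le hx hα]

/-- if α > 1, τ₀ ≥ 1, τ strictly increasing, and
∑ σ_{n+1}/τ_n^α converges, then limsup α^{-n} log τ_n < ∞. -/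
theorem stmt1 (α : ℝ) (hα : 1 < α) (τ : ℕ → ℝ) (hτ0 : 1 ≤ τ 0)
    (hmono : StrictMono τ)
    (hsum : Summable (fun n => (τ (n + 1) - τ n) / (τ n) ^ α)) :
    ∃ C : ℝ, ∀ᶠ n in Filter.atTop, Real.log (τ n) / α ^ n ≤ C := by
  have hτ : ∀ n, 1 ≤ τ n := fun n => hτ0.trans (hmono.monotone n.zero_le)
  have hτpos : ∀ n, 0 < τ n := fun n => one_pos.trans_le (hτ n)
  have hgap : ∀ᶠ n in atTop, τ (n + 1) - τ n < τ n ^ α :=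
    (hsum.tendsto_atTop_zero.eventually_lt_const one_pos).mono fun n hn => by
      rwa [div_lt_one (rpow_pos_of_pos (hτpos n) α)] at hn
  refine exists_div_pow_le_of_le_mul_add hα (log_nonneg one_le_two) (hgap.mono fun n hn => ?_)
  calc log (τ (n + 1)) ≤ log (2 * τ n ^ α) :=
        log_le_log (hτpos _) (le_two_mul_rpow_of_sub_lt_rpow (hτ n) hα.le hn)
    _ = α * log (τ n) + log 2 := by
        rw [log_mul two_ne_zero (rpow_pos_of_pos (hτpos n) α).ne', log_rpow (hτpos n)]
        ring
end

section
/- Let α > 1, τ₀ ≥ 1, σ_n = τ_n - τ_{n-1} ≥ 1, ρ_n = σ_{n+1}/τ_n → ∞, and suppose lim α^{-n} log τ_n = 0. If λ_n = σ_{n+1} σ_{n-1}^α / σ_n^{α+1} converges to a limit λ ∈ [0, ∞], then λ = 0. -/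
/-!
Suppose `λ_n ≥ δ > 0` for all large `n`. Once `ρ_{n+1} ≥ 1` we have `σ_{n+2} ≥ τ_{n+1}`, hence
`τ_{n+2} ≤ 2 σ_{n+2}`, and `σ_n ≤ τ_{n+1}`; feeding this into the definition of `λ` gives
`ρ_{n+2} ≥ (δ/2) ρ_{n+1}^α`. After taking logarithms and shifting by the fixed point of
`x ↦ α x + log (δ/2)`, the sequence `log ρ_n` grows at least like `c α^n` with `c > 0`, and so does
`log τ_{n+1} ≥ log ρ_n`, contradicting `α^{-n} log τ_n → 0`. Since `λ_n ≥ 0`, its limit is `0`.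
-/

open Filter Topology Real

theorem not_tendsto_div_pow_zero_of_mul_le_succ {α : ℝ} (hα : 0 < α) {y : ℕ → ℝ} {N : ℕ}
    (hy : Tendsto y atTop atTop) (hrec : ∀ n ≥ N, α * y n ≤ y (n + 1)) :
    ¬ Tendsto (fun n => y n / α ^ n) atTop (𝓝 0) := by
  intro h0
  obtain ⟨M, hMN, hyM⟩ := ((eventually_ge_atTop N).and (hy.eventually_ge_atTop 1)).exists
  have hgrowth : ∀ k, α ^ k ≤ y (M + k) := fun k =>
    calc α ^ k ≤ α ^ k * y M := le_mul_of_one_le_right (by positivity) hyM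
      _ ≤ y (M + k) := geom_le (u := fun k => y (M + k)) hα.le k
          fun j _ => hrec (M + j) (by omega)
  have hlower : ∀ᶠ n in atTop, 1 / α ^ M ≤ y n / α ^ n := by
    filter_upwards [eventually_ge_atTop M] with n hn
    obtain ⟨k, rfl⟩ := Nat.exists_eq_add_of_le hn
    rw [pow_add, div_le_div_iff₀ (by positivity) (by positivity)]
    nlinarith [hgrowth k, pow_pos hα M]
  exact (ge_of_tendsto h0 hlower).not_gt (by positivity)

theorem not_tendsto_log_div_pow_zero_of_mul_rpow_le_succ {α ε : ℝ} (hα : 1 < α) (hε : 0 < ε)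
    {r : ℕ → ℝ} {N : ℕ} (hr : Tendsto r atTop atTop) (hrec : ∀ n ≥ N, ε * r n ^ α ≤ r (n + 1)) :
    ¬ Tendsto (fun n => log (r n) / α ^ n) atTop (𝓝 0) := by
  -- `C` is chosen so that `α * C = log ε + C`, making the recursion for `log r + C` linear.
  set C := log ε / (α - 1)
  have hlog : Tendsto (fun n => log (r n)) atTop atTop := tendsto_log_atTop.comp hr
  obtain ⟨N', hN'⟩ := (hr.eventually_gt_atTop 0).exists_forall_of_atTop
  intro h0
  refine not_tendsto_div_pow_zero_of_mul_le_succ (α := α) (by linarith)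
    (y := fun n => log (r n) + C) (N := max N N') (tendsto_atTop_add_const_right _ C hlog)
    (fun n hn => ?_) ?_
  · have hrn : 0 < r n := hN' n (le_of_max_le_right hn)
    have hstep := log_le_log (by positivity) (hrec n (le_of_max_le_left hn))
    rw [log_mul hε.ne' (rpow_pos_of_pos hrn α).ne', log_rpow hrn] at hstep
    have : α * C = log ε + C := by
      simp only [C]; field_simp [(by linarith : α - 1 ≠ 0)]; ring
    linarith
  · have hC : Tendsto (fun n => C / α ^ n) atTop (𝓝 0) :=
      (tendsto_pow_atTop_atTop_of_one_lt hα).const_div_atTop C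
    simpa [add_div] using h0.add hC

theorem half_mul_div_rpow_le_div_add {α a b c t δ : ℝ} (hα : 0 ≤ α) (ha : 0 < a) (hb : 0 < b)
    (hat : a ≤ t) (htb : t ≤ b) (hδ : 0 ≤ δ) (h : δ ≤ c * a ^ α / b ^ (α + 1)) :
    δ / 2 * (b / t) ^ α ≤ c / (t + b) := by
  have ht : 0 < t := ha.trans_le hat
  have hc : δ * b * (b / t) ^ α ≤ c := calc
    δ * b * (b / t) ^ α ≤ δ * b * (b / a) ^ α := by gcongr
    _ = δ * b ^ (α + 1) / a ^ α := by
      rw [div_rpow hb.le ha.le, rpow_add_one hb.ne']; ring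
    _ ≤ c := by
      rw [div_le_iff₀ (by positivity)]
      rwa [le_div_iff₀ (by positivity)] at h
  rw [le_div_iff₀ (by positivity)]
  nlinarith [mul_le_mul_of_nonneg_left htb (by positivity : 0 ≤ δ / 2 * (b / t) ^ α)]

/-- `gap τ n` is the paper's `σ_{n+1}`. -/
def gap (τ : ℕ → ℝ) (n : ℕ) : ℝ := τ (n + 1) - τ n

/-- The paper's `ρ_n = σ_{n+1} / τ_n`. -/
noncomputable def relGap (τ : ℕ → ℝ) (n : ℕ) : ℝ := gap τ n / τ n

/-- `gapRatio α τ n` is the paper's `λ_{n+1}`. -/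
noncomputable def gapRatio (α : ℝ) (τ : ℕ → ℝ) (n : ℕ) : ℝ :=
  gap τ (n + 2) * gap τ n ^ α / gap τ (n + 1) ^ (α + 1)

section GapSequence

variable {α : ℝ} {τ : ℕ → ℝ}

theorem one_le_of_one_le_gap (hτ0 : 1 ≤ τ 0) (hgap : ∀ n, 1 ≤ gap τ n) (n : ℕ) : 1 ≤ τ n := by
  induction n with
  | zero => exact hτ0
  | succ k ih => have := hgap k; unfold gap at this; linarith

theorem gapRatio_nonneg (hgap : ∀ n, 1 ≤ gap τ n) (n : ℕ) : 0 ≤ gapRatio α τ n := by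
  have hpos : ∀ n, 0 ≤ gap τ n := fun n => zero_le_one.trans (hgap n)
  exact div_nonneg (mul_nonneg (hpos _) (rpow_nonneg (hpos _) _)) (rpow_nonneg (hpos _) _)

theorem log_relGap_le_log_succ (hτ0 : 1 ≤ τ 0) (hgap : ∀ n, 1 ≤ gap τ n) (n : ℕ) :
    log (relGap τ n) ≤ log (τ (n + 1)) := by
  have hτ := one_le_of_one_le_gap hτ0 hgap n
  have hσ := hgap n
  apply log_le_log (div_pos (by linarith) (by linarith))
  calc relGap τ n ≤ gap τ n := div_le_self (by linarith) hτ
    _ ≤ τ (n + 1) := by unfold gap; linarith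

theorem half_mul_relGap_rpow_le_relGap_succ (hτ0 : 1 ≤ τ 0) (hgap : ∀ n, 1 ≤ gap τ n)
    (hα : 0 ≤ α) {δ : ℝ} (hδ : 0 ≤ δ) {n : ℕ}
    (hρ : 1 ≤ relGap τ (n + 1)) (hratio : δ ≤ gapRatio α τ n) :
    δ / 2 * relGap τ (n + 1) ^ α ≤ relGap τ (n + 2) := by
  have hτ := one_le_of_one_le_gap hτ0 hgap
  have hτb : τ (n + 1) ≤ gap τ (n + 1) := by
    rwa [relGap, one_le_div (by linarith [hτ (n + 1)])] at hρ
  have hστ : gap τ n ≤ τ (n + 1) := by unfold gap; linarith [hτ n]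
  have hτ_add : τ (n + 1) + gap τ (n + 1) = τ (n + 2) := by unfold gap; ring
  have := half_mul_div_rpow_le_div_add hα (by linarith [hgap n]) (by linarith [hgap (n + 1)])
    hστ hτb hδ hratio
  rwa [hτ_add] at this

theorem not_eventually_le_gapRatio (hα : 1 < α) (hτ0 : 1 ≤ τ 0) (hgap : ∀ n, 1 ≤ gap τ n)
    (hρ : Tendsto (relGap τ) atTop atTop)
    (hθ : Tendsto (fun n => log (τ n) / α ^ n) atTop (𝓝 0)) {δ : ℝ} (hδ : 0 < δ) :
    ¬ ∀ᶠ n in atTop, δ ≤ gapRatio α τ n := by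
  intro hratio
  obtain ⟨N, hN⟩ := ((hρ.eventually_ge_atTop 1).and hratio).exists_forall_of_atTop
  refine not_tendsto_log_div_pow_zero_of_mul_rpow_le_succ hα (half_pos hδ) hρ (N := N + 1)
    (fun n hn => ?_) ?_
  · obtain ⟨k, rfl⟩ : ∃ k, n = k + 1 := ⟨n - 1, by omega⟩
    exact half_mul_relGap_rpow_le_relGap_succ hτ0 hgap (by linarith) hδ.le
      (hN (k + 1) (by omega)).1 (hN k (by omega)).2
  · have hαpos : 0 < α := by linarith
    have hupper : Tendsto (fun n => α * (log (τ (n + 1)) / α ^ (n + 1))) atTop (𝓝 0) := by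
      simpa using (hθ.comp (tendsto_add_atTop_nat 1)).const_mul α
    refine tendsto_of_tendsto_of_tendsto_of_le_of_le' tendsto_const_nhds hupper ?_ ?_
    · filter_upwards [eventually_ge_atTop N] with n hn
      exact div_nonneg (log_nonneg (hN n hn).1) (by positivity)
    · refine Eventually.of_forall fun n => ?_
      rw [pow_succ, ← div_div, mul_div_cancel₀ _ hαpos.ne']
      exact div_le_div_of_nonneg_right (log_relGap_le_log_succ hτ0 hgap n) (by positivity)

end GapSequence

/-- subcritical regime with ρ_n → ∞: if λ_n = σ_{n+1}σ_{n-1}^α/σ_n^{α+1}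
converges (to a finite limit or to ∞), the limit must be 0. -/
theorem stmt4 (α : ℝ) (hα : 1 < α) (τ : ℕ → ℝ) (hτ0 : 1 ≤ τ 0)
    (hinc : ∀ n, 1 ≤ τ (n + 1) - τ n)
    (hρ : Tendsto (fun n => (τ (n + 1) - τ n) / τ n) atTop atTop)
    (hθ : Tendsto (fun n => Real.log (τ n) / α ^ n) atTop (nhds 0)) :
    (¬ Tendsto (fun n => (τ (n + 3) - τ (n + 2)) * (τ (n + 1) - τ n) ^ α /
        (τ (n + 2) - τ (n + 1)) ^ (α + 1)) atTop atTop) ∧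
    ∀ l : ℝ, Tendsto (fun n => (τ (n + 3) - τ (n + 2)) * (τ (n + 1) - τ n) ^ α /
        (τ (n + 2) - τ (n + 1)) ^ (α + 1)) atTop (nhds l) → l = 0 := by
  have hnot_le := fun δ (hδ : 0 < δ) =>
    not_eventually_le_gapRatio (α := α) hα hτ0 hinc hρ hθ hδ
  refine ⟨fun h => hnot_le 1 one_pos (h.eventually_ge_atTop 1), fun l hl => ?_⟩
  have hl0 : 0 ≤ l := ge_of_tendsto' hl (gapRatio_nonneg hinc)
  by_contra hl_ne
  have hl_pos : 0 < l := lt_of_le_of_ne hl0 (Ne.symm hl_ne)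
  exact hnot_le (l / 2) (by positivity) (hl.eventually (eventually_ge_nhds (by linarith)))
end

section
/- Let α > 1 and θ > 0, and set φ_n = τ_n e^{-θ α^n} where (τ_n) is a positive sequence with lim α^{-n} log τ_n = θ. If ∑_{n≥0} φ_{n+1}/φ_n^α < ∞ then (φ_n) is unbounded. -/
/-!
If `φ ≤ c`, rescale to `ψ = φ / (c + 1) < 1`. Since `φ (n + 1) / φ n ^ α → 0`, eventually
`ψ (n + 1) ≤ ψ n ^ α`, so `log ψ n / α ^ n` is eventually nonincreasing. It tends to `0`, because
`log φ n / α ^ n → 0`, hence it is eventually nonnegative, i.e. `ψ n ≥ 1`: a contradiction.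
-/

open Filter Topology Real

lemma mul_le_mul_rpow_of_div_rpow_le {α r x y : ℝ} (hr : 0 < r) (hx : 0 < x)
    (h : y / x ^ α ≤ r ^ (α - 1)) : r * y ≤ (r * x) ^ α := by
  have hy : y ≤ r ^ (α - 1) * x ^ α := (div_le_iff₀ (rpow_pos_of_pos hx α)).mp h
  calc r * y ≤ r * (r ^ (α - 1) * x ^ α) := mul_le_mul_of_nonneg_left hy hr.le
    _ = r ^ (1 + (α - 1)) * x ^ α := by rw [rpow_add hr, rpow_one, mul_assoc]
    _ = (r * x) ^ α := by rw [add_sub_cancel, mul_rpow hr.le hx.le]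

lemma log_div_pow_succ_le_of_le_rpow {α x y : ℝ} (hα : 0 < α) (hx : 0 < x) (hy : 0 < y)
    (h : y ≤ x ^ α) (n : ℕ) : log y / α ^ (n + 1) ≤ log x / α ^ n := by
  have hlog : log y ≤ α * log x := (log_le_log hy h).trans_eq (log_rpow hx α)
  calc log y / α ^ (n + 1) ≤ α * log x / α ^ (n + 1) := by gcongr
    _ = log x / α ^ n := by rw [pow_succ]; field_simp

lemma one_le_of_le_rpow_of_tendsto_log_div_pow {α : ℝ} (hα : 0 < α) {ψ : ℕ → ℝ}
    (hψ : ∀ n, 0 < ψ n) {k : ℕ} (hstep : ∀ n, k ≤ n → ψ (n + 1) ≤ ψ n ^ α)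
    (hlim : Tendsto (fun n => log (ψ n) / α ^ n) atTop (𝓝 0)) {n : ℕ} (hn : k ≤ n) :
    1 ≤ ψ n := by
  have hanti : ∀ m, n ≤ m → log (ψ m) / α ^ m ≤ log (ψ n) / α ^ n := by
    intro m hm
    induction m, hm using Nat.le_induction with
    | base => exact le_rfl
    | succ m hm ih =>
      exact (log_div_pow_succ_le_of_le_rpow hα (hψ m) (hψ (m + 1))
        (hstep m (hn.trans hm)) m).trans ih
  have hnonneg : 0 ≤ log (ψ n) / α ^ n :=
    le_of_tendsto hlim (eventually_atTop.mpr ⟨n, hanti⟩)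
  rw [le_div_iff₀ (pow_pos hα n), zero_mul] at hnonneg
  exact (log_nonneg_iff (hψ n)).mp hnonneg

lemma tendsto_log_const_mul_div_pow {α r : ℝ} (hα : 1 < α) (hr : 0 < r) {φ : ℕ → ℝ}
    (hφ : ∀ n, 0 < φ n) (hlim : Tendsto (fun n => log (φ n) / α ^ n) atTop (𝓝 0)) :
    Tendsto (fun n => log (r * φ n) / α ^ n) atTop (𝓝 0) := by
  have hinv : Tendsto (fun n : ℕ => log r * (α ^ n)⁻¹) atTop (𝓝 0) := by
    simpa using ((tendsto_pow_atTop_atTop_of_one_lt hα).inv_tendsto_atTop).const_mul (log r)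
  refine (add_zero (0 : ℝ) ▸ hinv.add hlim).congr fun n => ?_
  rw [log_mul hr.ne' (hφ n).ne', add_div, div_eq_mul_inv (log r)]

theorem not_bddAbove_of_tendsto_div_rpow {α : ℝ} (hα : 1 < α) {φ : ℕ → ℝ}
    (hφ : ∀ n, 0 < φ n) (hlog : Tendsto (fun n => log (φ n) / α ^ n) atTop (𝓝 0))
    (hratio : Tendsto (fun n => φ (n + 1) / φ n ^ α) atTop (𝓝 0)) :
    ¬ BddAbove (Set.range φ) := by
  rintro ⟨c, hc⟩
  have hφc : ∀ n, φ n ≤ c := fun n => hc ⟨n, rfl⟩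
  have hc1 : 0 < c + 1 := by linarith [hφ 0, hφc 0]
  set r := (c + 1)⁻¹ with hr_def
  have hr : 0 < r := inv_pos.mpr hc1
  obtain ⟨k, hk⟩ := eventually_atTop.mp
    (hratio.eventually (gt_mem_nhds (rpow_pos_of_pos hr (α - 1))))
  have hstep : ∀ n, k ≤ n → r * φ (n + 1) ≤ (r * φ n) ^ α := fun n hn =>
    mul_le_mul_rpow_of_div_rpow_le hr (hφ n) (hk n hn).le
  have hone : 1 ≤ r * φ k :=
    one_le_of_le_rpow_of_tendsto_log_div_pow (by linarith) (fun n => mul_pos hr (hφ n))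
      hstep (tendsto_log_const_mul_div_pow hα hr hφ hlog) le_rfl
  have hlt : r * φ k < 1 := by
    rw [hr_def, inv_mul_lt_one₀ hc1]
    linarith [hφc k]
  exact hlt.not_ge hone

theorem stmt6_general (α θ : ℝ) (hα : 1 < α) (τ : ℕ → ℝ) (hτ : ∀ n, 0 < τ n)
    (hlim : Tendsto (fun n => Real.log (τ n) / α ^ n) atTop (nhds θ))
    (hsum : Summable (fun n => (τ (n + 1) * Real.exp (-θ * α ^ (n + 1))) /
      (τ n * Real.exp (-θ * α ^ n)) ^ α)) :
    ¬ BddAbove (Set.range (fun n => τ n * Real.exp (-θ * α ^ n))) := by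
  have hlog : Tendsto (fun n => log (τ n * exp (-θ * α ^ n)) / α ^ n) atTop (𝓝 0) := by
    refine (sub_self θ ▸ hlim.sub_const θ).congr fun n => ?_
    have hαn : α ^ n ≠ 0 := pow_ne_zero n (by linarith)
    rw [log_mul (hτ n).ne' (exp_pos _).ne', log_exp]
    field_simp
    ring
  exact not_bddAbove_of_tendsto_div_rpow hα (fun n => mul_pos (hτ n) (exp_pos _)) hlog
    hsum.tendsto_atTop_zero

/-- critical regime: with φ_n = τ_n e^{-θα^n}, convergence of
∑ φ_{n+1}/φ_n^α forces (φ_n) to be unbounded. -/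
theorem stmt6 (α θ : ℝ) (hα : 1 < α) (hθ : 0 < θ) (τ : ℕ → ℝ) (hτ : ∀ n, 0 < τ n)
    (hlim : Tendsto (fun n => Real.log (τ n) / α ^ n) atTop (nhds θ))
    (hsum : Summable (fun n => (τ (n + 1) * Real.exp (-θ * α ^ (n + 1))) /
      (τ n * Real.exp (-θ * α ^ n)) ^ α)) :
    ¬ BddAbove (Set.range (fun n => τ n * Real.exp (-θ * α ^ n))) :=
  stmt6_general α θ hα τ hτ hlim hsum
end

section
/- Let (σ_n) be a positive sequence bounded above by σ with σ_n ≥ 1, τ_n = τ₀ + ∑_{i≤n} σ_i, and for α > 1 define π_{m,k} = ∏_{j=m+1}^{k} (1 + (α-1)σ_j/τ_j). Then there exist functions o(1) → 0 (as m → ∞, uniformly in k ≥ m) with m^{(α-1)/σ + o(1)} π_{m,k} ≥ k^{(α-1)/σ + o(1)} and m^{(α-1)σ + o(1)} π_{m,k} ≤ k^{(α-1)σ + o(1)}; in particular, c₁(ε) (k/m)^{(α-1)/σ - ε} ≤ π_{m,k} ≤ c₂(ε) (k/m)^{(α-1)σ + ε} for every ε > 0 and all m large. -/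
/-!
Write `a j = (α - 1) σ_j / τ_j`. Since `j ≤ τ_j ≤ τ₀ + σ j`, we have
`β / (j + s) ≤ a j ≤ (α - 1) σ / j` with `β = (α - 1) / σ` and `s = τ₀ / σ`.
Then `log (1 + a j) ≤ a j ≤ (α - 1) σ (log j - log (j - 1))` and
`log (1 + a j) ≥ a j / (1 + a j) ≥ β / (j + s + β) ≥ β (log (j + s + β + 1) - log (j + s + β))`,
so both bounds on `log π_{m,k}` telescope. This gives `π_{m,k} ≤ (k / m) ^ ((α - 1) σ)` and
`π_{m,k} ≥ ((k + K + 1) / (m + K + 1)) ^ β ≥ (K + 2) ^ (-β) (k / m) ^ β` with `K = s + β`,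
so the `ε` only serves as slack.
-/

open Real Finset

theorem Finset.sum_Icc_succ_eq_sum_Ico {M : Type*} [AddCommMonoid M] (f : ℕ → M) (m k : ℕ) :
    ∑ j ∈ Icc (m + 1) k, f j = ∑ i ∈ Ico m k, f (i + 1) := by
  rw [← Ico_add_one_right_eq_Icc, sum_Ico_add']

section Telescoping

variable {M : Type*} [AddCommGroup M] [PartialOrder M] [IsOrderedAddMonoid M]
  {f g : ℕ → M} {m k : ℕ}

theorem sum_Icc_le_sub_of_le_sub (hmk : m ≤ k) (h : ∀ i ∈ Ico m k, f (i + 1) ≤ g (i + 1) - g i) :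
    ∑ j ∈ Icc (m + 1) k, f j ≤ g k - g m := by
  rw [sum_Icc_succ_eq_sum_Ico, ← sum_Ico_sub g hmk]
  exact sum_le_sum h

theorem sub_le_sum_Icc_of_sub_le (hmk : m ≤ k) (h : ∀ i ∈ Ico m k, g (i + 1) - g i ≤ f (i + 1)) :
    g k - g m ≤ ∑ j ∈ Icc (m + 1) k, f j := by
  rw [sum_Icc_succ_eq_sum_Ico, ← sum_Ico_sub g hmk]
  exact sum_le_sum h

end Telescoping

namespace Real

theorem inv_add_one_le_log_add_one_sub_log {x : ℝ} (hx : 0 < x) :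
    (x + 1)⁻¹ ≤ log (x + 1) - log x := by
  have h := one_sub_inv_le_log_of_pos (div_pos (by positivity : 0 < x + 1) hx)
  rw [log_div (by positivity) hx.ne', inv_div] at h
  calc (x + 1)⁻¹ = 1 - x / (x + 1) := by field_simp; ring
    _ ≤ _ := h

theorem log_add_one_sub_log_le_inv {x : ℝ} (hx : 0 < x) :
    log (x + 1) - log x ≤ x⁻¹ := by
  have h := log_le_sub_one_of_pos (div_pos (by positivity : 0 < x + 1) hx)
  rw [log_div (by positivity) hx.ne'] at h
  calc log (x + 1) - log x ≤ (x + 1) / x - 1 := h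
    _ = x⁻¹ := by field_simp; ring

end Real

section ProductBounds

variable {a : ℕ → ℝ}

theorem prod_one_add_le_rpow {c : ℝ} (hc : 0 ≤ c) (ha₀ : ∀ j, -1 < a j)
    (ha : ∀ j, 1 ≤ j → a j ≤ c / j) {m k : ℕ} (hm : 1 ≤ m) (hmk : m ≤ k) :
    ∏ j ∈ Icc (m + 1) k, (1 + a j) ≤ ((k : ℝ) / m) ^ c := by
  have hpos : ∀ j, 0 < 1 + a j := fun j => by linarith [ha₀ j]
  have hm' : (0 : ℝ) < m := by exact_mod_cast hm
  have hk' : (0 : ℝ) < k := by exact_mod_cast hm.trans hmk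
  rw [le_rpow_iff_log_le (prod_pos fun j _ => hpos j) (by positivity),
    log_prod fun j _ => (hpos j).ne', log_div (by positivity) (by positivity), mul_sub]
  refine sum_Icc_le_sub_of_le_sub (g := fun n => c * log n) hmk fun i hi => ?_
  have hi0 : (0 : ℝ) < i := Nat.cast_pos.mpr (hm.trans (mem_Ico.mp hi).1)
  push_cast
  calc log (1 + a (i + 1)) ≤ a (i + 1) := by linarith [log_le_sub_one_of_pos (hpos (i + 1))]
    _ ≤ c * ((i : ℝ) + 1)⁻¹ := by simpa [div_eq_mul_inv] using ha (i + 1) (by omega)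
    _ ≤ c * (log (i + 1) - log i) :=
        mul_le_mul_of_nonneg_left (inv_add_one_le_log_add_one_sub_log hi0) hc
    _ = c * log (i + 1) - c * log i := mul_sub _ _ _

theorem exists_mul_rpow_le_prod_one_add {β s : ℝ} (hβ : 0 ≤ β) (hs : 0 ≤ s)
    (ha : ∀ j, 1 ≤ j → β / (j + s) ≤ a j) :
    ∃ c > 0, ∀ m : ℕ, 1 ≤ m → ∀ k : ℕ, m ≤ k →
      c * ((k : ℝ) / m) ^ β ≤ ∏ j ∈ Icc (m + 1) k, (1 + a j) := by
  set K := s + β with hKdef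
  refine ⟨((K + 2) ^ β)⁻¹, by positivity, fun m hm k hmk => ?_⟩
  have hm' : (1 : ℝ) ≤ m := by exact_mod_cast hm
  have hpos : ∀ j, 1 ≤ j → 0 < 1 + a j := fun j hj =>
    by linarith [(by positivity : 0 ≤ β / (j + s)).trans (ha j hj)]
  have hlog : β * log ((k + K + 1) / (m + K + 1)) ≤ ∑ j ∈ Icc (m + 1) k, log (1 + a j) := by
    rw [log_div (by positivity) (by positivity), mul_sub]
    refine sub_le_sum_Icc_of_sub_le (g := fun n => β * log (n + K + 1)) hmk fun i _ => ?_
    have hai := ha (i + 1) (by omega)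
    push_cast at hai ⊢
    calc β * log (i + 1 + K + 1) - β * log (i + K + 1)
        = β * (log ((i + 1 + s + β) + 1) - log (i + 1 + s + β)) := by
          rw [hKdef]; ring_nf
      _ ≤ β * (i + 1 + s + β)⁻¹ :=
          mul_le_mul_of_nonneg_left (log_add_one_sub_log_le_inv (by positivity)) hβ
      _ = 1 - (1 + β / (i + 1 + s))⁻¹ := by field_simp; ring
      _ ≤ 1 - (1 + a (i + 1))⁻¹ := by gcongr
      _ ≤ log (1 + a (i + 1)) := one_sub_inv_le_log_of_pos (hpos _ (by omega))
  have hratio : (k : ℝ) / m / (K + 2) ≤ (k + K + 1) / (m + K + 1) := by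
    rw [div_div, div_le_div_iff₀ (by positivity) (by positivity)]
    nlinarith [mul_nonneg (mul_nonneg (by linarith : (0 : ℝ) ≤ k) (by linarith : (0 : ℝ) ≤ m - 1))
      (by linarith : 0 ≤ K + 1), (by positivity : (0 : ℝ) ≤ m * (K + 1) * (K + 2))]
  calc ((K + 2) ^ β)⁻¹ * ((k : ℝ) / m) ^ β = ((k : ℝ) / m / (K + 2)) ^ β := by
        rw [div_rpow (x := (k : ℝ) / m) (by positivity) (by positivity), inv_mul_eq_div]
    _ ≤ ((k + K + 1) / (m + K + 1)) ^ β := rpow_le_rpow (by positivity) hratio hβ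
    _ ≤ ∏ j ∈ Icc (m + 1) k, (1 + a j) := by
        rw [rpow_le_iff_le_log (by positivity) (prod_pos fun j hj => hpos j (by grind)),
          log_prod fun j hj => (hpos j (by grind)).ne']
        exact hlog

end ProductBounds

section BinSizes

variable {σf : ℕ → ℝ} {α σ τ0 : ℝ}

theorem natCast_le_sum_Icc_one (hσ1 : ∀ n, 1 ≤ σf n) (j : ℕ) :
    (j : ℝ) ≤ ∑ i ∈ Icc 1 j, σf i := by
  simpa using card_nsmul_le_sum (Icc 1 j) σf 1 fun i _ => hσ1 i

theorem sum_Icc_one_le_mul_natCast (hσ2 : ∀ n, σf n ≤ σ) (j : ℕ) :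
    ∑ i ∈ Icc 1 j, σf i ≤ σ * j := by
  simpa [mul_comm] using sum_le_card_nsmul (Icc 1 j) σf σ fun i _ => hσ2 i

theorem mul_div_le_div_natCast (hα : 1 ≤ α) (hτ0 : 0 ≤ τ0) (hσ1 : ∀ n, 1 ≤ σf n)
    (hσ2 : ∀ n, σf n ≤ σ) {j : ℕ} (hj : 1 ≤ j) :
    (α - 1) * σf j / (τ0 + ∑ i ∈ Icc 1 j, σf i) ≤ (α - 1) * σ / j := by
  have hj' : (1 : ℝ) ≤ j := by exact_mod_cast hj
  exact div_le_div₀ (by nlinarith [hσ1 j, hσ2 j]) (by nlinarith [hσ2 j]) (by linarith)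
    (by linarith [natCast_le_sum_Icc_one hσ1 j])

theorem div_le_mul_div (hα : 1 ≤ α) (hτ0 : 0 ≤ τ0) (hσ1 : ∀ n, 1 ≤ σf n)
    (hσ2 : ∀ n, σf n ≤ σ) {j : ℕ} (hj : 1 ≤ j) :
    (α - 1) / σ / (j + τ0 / σ) ≤ (α - 1) * σf j / (τ0 + ∑ i ∈ Icc 1 j, σf i) := by
  have hσ : 0 < σ := by linarith [hσ1 0, hσ2 0]
  have hj' : (1 : ℝ) ≤ j := by exact_mod_cast hj
  rw [div_div, mul_add, mul_div_cancel₀ _ hσ.ne']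
  exact div_le_div₀ (by nlinarith [hσ1 j]) (le_mul_of_one_le_right (by linarith) (hσ1 j))
    (by linarith [natCast_le_sum_Icc_one hσ1 j]) (by linarith [sum_Icc_one_le_mul_natCast hσ2 j])

end BinSizes

/-- for bounded bin sizes 1 ≤ σ_j ≤ σ, the products
π_{m,k} = ∏_{j=m+1}^k (1 + (α-1)σ_j/τ_j) satisfy polynomial bounds
c₁ (k/m)^{(α-1)/σ - ε} ≤ π_{m,k} ≤ c₂ (k/m)^{(α-1)σ + ε} for large m. -/
theorem stmt10 (α σ τ0 : ℝ) (hα : 1 < α) (hτ0 : 1 ≤ τ0)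
    (σf : ℕ → ℝ) (hσ1 : ∀ n, 1 ≤ σf n) (hσ2 : ∀ n, σf n ≤ σ) :
    ∀ ε > (0 : ℝ), ∃ c₁ > (0 : ℝ), ∃ c₂ > (0 : ℝ), ∃ M : ℕ, ∀ m ≥ M, ∀ k ≥ m,
      c₁ * ((k : ℝ) / (m : ℝ)) ^ ((α - 1) / σ - ε) ≤
        (∏ j ∈ Finset.Icc (m + 1) k,
          (1 + (α - 1) * σf j / (τ0 + ∑ i ∈ Finset.Icc 1 j, σf i))) ∧
      (∏ j ∈ Finset.Icc (m + 1) k,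
          (1 + (α - 1) * σf j / (τ0 + ∑ i ∈ Finset.Icc 1 j, σf i))) ≤
        c₂ * ((k : ℝ) / (m : ℝ)) ^ ((α - 1) * σ + ε) := by
  intro ε hε
  have hσ : 0 < σ := by linarith [hσ1 0, hσ2 0]
  have hτ0' : 0 ≤ τ0 := by linarith
  obtain ⟨c₁, hc₁, hlower⟩ := exists_mul_rpow_le_prod_one_add
    (div_nonneg (by linarith) hσ.le) (div_nonneg hτ0' hσ.le)
    fun j hj => div_le_mul_div hα.le hτ0' hσ1 hσ2 hj
  refine ⟨c₁, hc₁, 1, one_pos, 1, fun m hm k hk => ?_⟩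
  have hkm : 1 ≤ (k : ℝ) / m := by
    rw [one_le_div (by exact_mod_cast hm)]; exact_mod_cast hk
  constructor
  · calc c₁ * ((k : ℝ) / m) ^ ((α - 1) / σ - ε) ≤ c₁ * ((k : ℝ) / m) ^ ((α - 1) / σ) := by
          gcongr; linarith
      _ ≤ _ := hlower m hm k hk
  · have hgt : ∀ j, -1 < (α - 1) * σf j / (τ0 + ∑ i ∈ Icc 1 j, σf i) := fun j =>
      neg_one_lt_zero.trans_le <| div_nonneg (by nlinarith [hσ1 j])
        (by linarith [natCast_le_sum_Icc_one hσ1 j, (Nat.cast_nonneg j : (0 : ℝ) ≤ j)])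
    calc _ ≤ ((k : ℝ) / m) ^ ((α - 1) * σ) := prod_one_add_le_rpow (by nlinarith) hgt
          (fun j hj => mul_div_le_div_natCast hα.le hτ0' hσ1 hσ2 hj) hm hk
      _ ≤ 1 * ((k : ℝ) / m) ^ ((α - 1) * σ + ε) := by
          rw [one_mul]; exact rpow_le_rpow_of_exponent_le hkm (by linarith)
end

section
/- Let (M_n) be a martingale with M_0 = 0 adapted to a filtration (F_n), with conditionally independent increments of the form M_n - M_{n-1} = B_n - σ_n P_{n-1}, where conditionally on F_{n-1}, B_n is Binomial(σ_n, P_{n-1}) and P_{n-1} is F_{n-1}-measurable with values in [0,1], σ_n ≥ 1 integers. If Y_n = ∑_{i=1}^n σ_i P_{i-1} → ∞ almost surely, then T_n = T_0 + ∑_{i=1}^n B_i → ∞ almost surely. -/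
/-!
Given `ℱ n`, the event `B (n + 1) ≠ 0` has probability `1 - (1 - P n) ^ σ`, with `σ = σn (n + 1)`,
and Bernoulli's inequality bounds this from below by `min 1 (σ * P n) / 2`. As `Y n → ∞`, these
conditional probabilities have divergent sum, so by Lévy's conditional Borel–Cantelli lemma
infinitely many of the events occur almost surely, and each adds at least one to `T n`.
-/

open MeasureTheory Filter

theorem Summable.of_summable_min_one {ι : Type*} {x : ι → ℝ} (hx : ∀ i, 0 ≤ x i)
    (h : Summable fun i => min 1 (x i)) : Summable x := by
  refine h.of_norm_bounded_eventually ?_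
  filter_upwards [h.tendsto_cofinite_zero.eventually (gt_mem_nhds one_pos)] with i hi
  rw [Real.norm_of_nonneg (hx i)]
  exact (min_eq_right (not_le.1 fun h1 => hi.not_ge (min_eq_left h1).ge).le).ge

theorem min_one_mul_le_two_mul_one_sub_one_sub_pow {p : ℝ} (hp0 : 0 ≤ p) (hp1 : p ≤ 1)
    (n : ℕ) : min 1 (n * p) ≤ 2 * (1 - (1 - p) ^ n) := by
  have hbernoulli : 1 + n * p ≤ (1 + p) ^ n := one_add_mul_le_pow (by linarith) n
  have hkey : (1 - p) ^ n * (1 + n * p) ≤ 1 := calc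
    (1 - p) ^ n * (1 + n * p) ≤ (1 - p) ^ n * (1 + p) ^ n :=
      mul_le_mul_of_nonneg_left hbernoulli (pow_nonneg (by linarith) n)
    _ = (1 - p ^ 2) ^ n := by rw [← mul_pow]; ring
    _ ≤ 1 := pow_le_one₀ (by nlinarith) (by nlinarith)
  have hnp : 0 ≤ (n : ℝ) * p := by positivity
  have hq : 0 ≤ (1 - p) ^ n := pow_nonneg (by linarith) n
  rcases le_total ((n : ℝ) * p) 1 with h | h
  · rw [min_eq_right h]; nlinarith
  · rw [min_eq_left h]; nlinarith

theorem tendsto_sum_one_sub_one_sub_pow_atTop {n : ℕ → ℕ} {p : ℕ → ℝ}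
    (hp : ∀ i, p i ∈ Set.Icc (0 : ℝ) 1)
    (h : Tendsto (fun k => ∑ i ∈ Finset.range k, (n i : ℝ) * p i) atTop atTop) :
    Tendsto (fun k => ∑ i ∈ Finset.range k, (1 - (1 - p i) ^ n i)) atTop atTop := by
  have hq : ∀ i, 0 ≤ 1 - (1 - p i) ^ n i := fun i =>
    sub_nonneg.2 (pow_le_one₀ (by linarith [(hp i).2]) (by linarith [(hp i).1]))
  have hnp : ∀ i, 0 ≤ (n i : ℝ) * p i := fun i => mul_nonneg (Nat.cast_nonneg _) (hp i).1
  by_contra hdiv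
  have hsum := (summable_iff_not_tendsto_nat_atTop_of_nonneg hq).2 hdiv
  have hmin : Summable fun i => min 1 ((n i : ℝ) * p i) :=
    (hsum.mul_left 2).of_nonneg_of_le (fun i => le_min zero_le_one (hnp i))
      fun i => min_one_mul_le_two_mul_one_sub_one_sub_pow (hp i).1 (hp i).2 (n i)
  exact (summable_iff_not_tendsto_nat_atTop_of_nonneg hnp).1 (hmin.of_summable_min_one hnp) h

theorem condExp_indicator_compl_ae_eq {Ω : Type*} {m m0 : MeasurableSpace Ω} {μ : Measure Ω}
    [IsFiniteMeasure μ] (hm : m ≤ m0) {s : Set Ω} (hs : MeasurableSet s) :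
    μ[sᶜ.indicator 1 | m] =ᵐ[μ] 1 - μ[s.indicator (1 : Ω → ℝ) | m] := by
  rw [Set.indicator_compl]
  refine (condExp_sub (integrable_const 1) ((integrable_const 1).indicator hs) m).trans ?_
  rw [show (1 : Ω → ℝ) = fun _ => 1 from rfl, condExp_const hm]

theorem ae_tendsto_sum_atTop_of_tendsto_sum_condExp {Ω : Type*} {m0 : MeasurableSpace Ω}
    {μ : Measure Ω} [IsFiniteMeasure μ] {ℱ : Filtration ℕ m0} {X : ℕ → Ω → ℕ}
    (hX : ∀ n, StronglyMeasurable[ℱ n] (X n)) :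
    ∀ᵐ ω ∂μ, Tendsto (fun n => ∑ k ∈ Finset.range n,
        μ[{ω | X (k + 1) ω = 0}ᶜ.indicator (1 : Ω → ℝ) | ℱ k] ω) atTop atTop →
      Tendsto (fun n => ∑ k ∈ Finset.range n, (X (k + 1) ω : ℝ)) atTop atTop := by
  filter_upwards [tendsto_sum_indicator_atTop_iff' (μ := μ)
    fun n => ((hX n).measurable (measurableSet_singleton 0)).compl] with ω hlevy hcond
  refine tendsto_atTop_mono (fun n => Finset.sum_le_sum fun k _ => ?_) (hlevy.2 hcond)
  by_cases h : X (k + 1) ω = 0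
  · simp [h]
  · simpa [h] using Nat.one_le_iff_ne_zero.2 h

theorem stmt11_general {Ω : Type*} {m0 : MeasurableSpace Ω} {μ : Measure Ω}
    [IsProbabilityMeasure μ] (ℱ : Filtration ℕ m0)
    (σn : ℕ → ℕ)
    (P : ℕ → Ω → ℝ) (B : ℕ → Ω → ℕ)
    (hP01 : ∀ n ω, P n ω ∈ Set.Icc (0 : ℝ) 1)
    (hBmeas : ∀ n, StronglyMeasurable[ℱ n] (B n))
    (hbinom : ∀ n, ∀ k ≤ σn (n + 1),
      μ[Set.indicator {ω | B (n + 1) ω = k} (fun _ => (1 : ℝ)) | ℱ n] =ᵐ[μ]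
        fun ω => ((σn (n + 1)).choose k : ℝ) * (P n ω) ^ k *
          (1 - P n ω) ^ (σn (n + 1) - k))
    (T0 : ℝ)
    (hY : ∀ᵐ ω ∂μ, Tendsto (fun n => ∑ i ∈ Finset.range n, (σn (i + 1) : ℝ) * P i ω)
      atTop atTop) :
    ∀ᵐ ω ∂μ, Tendsto (fun n => T0 + ∑ i ∈ Finset.range n, (B (i + 1) ω : ℝ))
      atTop atTop := by
  have hcond : ∀ k, μ[{ω | B (k + 1) ω = 0}ᶜ.indicator (1 : Ω → ℝ) | ℱ k] =ᵐ[μ]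
      fun ω => 1 - (1 - P k ω) ^ σn (k + 1) := by
    intro k
    have hzero : MeasurableSet {ω | B (k + 1) ω = 0} :=
      ℱ.le (k + 1) _ ((hBmeas (k + 1)).measurable (measurableSet_singleton 0))
    filter_upwards [condExp_indicator_compl_ae_eq (ℱ.le k) hzero, hbinom k 0 (Nat.zero_le _)]
      with ω hcompl hbinom0
    rw [hcompl, Pi.sub_apply, Pi.one_def, hbinom0]
    simp
  filter_upwards [ae_tendsto_sum_atTop_of_tendsto_sum_condExp (μ := μ) hBmeas, hY,
    ae_all_iff.2 hcond] with ω hlevy hYω hcondω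
  refine tendsto_atTop_add_const_left _ T0 (hlevy ?_)
  simp only [hcondω]
  exact tendsto_sum_one_sub_one_sub_pow_atTop (fun i => hP01 i ω) hYω

/-- if, conditionally on F_n, B_{n+1} ~ Binomial(σ_{n+1}, P_n) with
P adapted and [0,1]-valued, and Y_n = ∑_{i≤n} σ_i P_{i-1} → ∞ a.s., then
T_n = T_0 + ∑_{i≤n} B_i → ∞ a.s. -/
theorem stmt11 {Ω : Type*} {m0 : MeasurableSpace Ω} {μ : Measure Ω}
    [IsProbabilityMeasure μ] (ℱ : Filtration ℕ m0)
    (σn : ℕ → ℕ) (hσ : ∀ n, 1 ≤ σn n)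
    (P : ℕ → Ω → ℝ) (B : ℕ → Ω → ℕ)
    (hPadapted : ∀ n, StronglyMeasurable[ℱ n] (P n))
    (hP01 : ∀ n ω, P n ω ∈ Set.Icc (0 : ℝ) 1)
    (hBmeas : ∀ n, StronglyMeasurable[ℱ n] (B n))
    (hBle : ∀ n ω, B (n + 1) ω ≤ σn (n + 1))
    (hbinom : ∀ n, ∀ k ≤ σn (n + 1),
      μ[Set.indicator {ω | B (n + 1) ω = k} (fun _ => (1 : ℝ)) | ℱ n] =ᵐ[μ]
        fun ω => ((σn (n + 1)).choose k : ℝ) * (P n ω) ^ k *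
          (1 - P n ω) ^ (σn (n + 1) - k))
    (T0 : ℝ)
    (hY : ∀ᵐ ω ∂μ, Tendsto (fun n => ∑ i ∈ Finset.range n, (σn (i + 1) : ℝ) * P i ω)
      atTop atTop) :
    ∀ᵐ ω ∂μ, Tendsto (fun n => T0 + ∑ i ∈ Finset.range n, (B (i + 1) ω : ℝ))
      atTop atTop :=
  stmt11_general ℱ σn P B hP01 hBmeas hbinom T0 hY
end

section
/- In the balls-and-bins model with feedback exponent α > 1: if ∑_{n≥0} σ_{n+1}/τ_n^α = ∞, then almost surely both bins receive infinitely many balls, i.e., the probability of monopoly is zero. -/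
open MeasureTheory Filter

/-! By Lévy's conditional Borel–Cantelli lemma it suffices that, given `ℱ n`, the probability
that step `n + 1` sends a ball to bin 1 (resp. bin 2) has a divergent sum. Every bin always
holds at least one ball, so `Θ_n ∈ [1/τ_n, 1 - 1/τ_n]`; as `ψ(θ) ≥ θ^α` and
`1 - ψ(θ) = ψ(1 - θ)`, both `P_n` and `1 - P_n` are at least `τ_n^{-α}`. Hence bin 1 receives
a ball at step `n + 1` with conditional probability `1 - (1 - P_n)^σ_{n+1}`, which is at least
`min(1, σ_{n+1} τ_n^{-α}) / 2`, whose sum diverges; likewise for bin 2. -/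

theorem min_one_mul_div_two_le_one_sub_one_sub_pow {p : ℝ} (hp0 : 0 ≤ p) (hp1 : p ≤ 1)
    (n : ℕ) : min 1 (n * p) / 2 ≤ 1 - (1 - p) ^ n := by
  have hbernoulli : 1 + n * p ≤ (1 + p) ^ n := one_add_mul_le_pow (by linarith) n
  -- `(1 - p)(1 + p) ≤ 1` bounds `(1 - p) ^ n` by `1 / (1 + n p)`.
  have hprod : (1 - p) ^ n * (1 + p) ^ n ≤ 1 := by
    rw [← mul_pow]
    exact pow_le_one₀ (by nlinarith) (by nlinarith)
  have hpow : (1 - p) ^ n * (1 + n * p) ≤ 1 :=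
    (mul_le_mul_of_nonneg_left hbernoulli (pow_nonneg (by linarith) n)).trans hprod
  rcases le_total (n * p : ℝ) 1 with h | h
  · rw [min_eq_right h]
    nlinarith [mul_nonneg (mul_nonneg n.cast_nonneg hp0) (sub_nonneg.mpr h)]
  · rw [min_eq_left h]; nlinarith

theorem not_summable_min_one {a : ℕ → ℝ} (ha : ¬ Summable a) :
    ¬ Summable fun n => min 1 (a n) := by
  intro hmin
  refine ha (hmin.congr_cofinite ?_)
  rw [Nat.cofinite_eq_atTop]
  filter_upwards [hmin.tendsto_atTop_zero.eventually (gt_mem_nhds one_pos)] with n hn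
  exact min_eq_right (min_lt_iff.mp hn |>.resolve_left (lt_irrefl 1)).le

section ConditionalBorelCantelli

variable {Ω : Type*} {m0 : MeasurableSpace Ω} {μ : Measure Ω} [IsFiniteMeasure μ]
  {ℱ : Filtration ℕ m0}

theorem ae_frequently_mem_of_le_condExp {s : ℕ → Set Ω}
    (hs : ∀ n, MeasurableSet[ℱ n] (s n)) {c : ℕ → ℝ} (hc0 : ∀ n, 0 ≤ c n) (hc : ¬ Summable c)
    (hle : ∀ n, ∀ᵐ ω ∂μ, c n ≤ μ[(s (n + 1)).indicator 1 | ℱ n] ω) :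
    ∀ᵐ ω ∂μ, ∃ᶠ n in atTop, ω ∈ s (n + 1) := by
  have hsum : Tendsto (fun n => ∑ k ∈ Finset.range n, c k) atTop atTop :=
    (not_summable_iff_tendsto_nat_atTop_of_nonneg hc0).mp hc
  filter_upwards [ae_mem_limsup_atTop_iff μ hs, ae_all_iff.mpr hle] with ω hω hleω
  have hmem := hω.mpr (tendsto_atTop_mono (fun n => Finset.sum_le_sum fun k _ => hleω k) hsum)
  rwa [← limsup_nat_add s 1, mem_limsup_iff_frequently_mem] at hmem

theorem condExp_indicator_compl_one {m : MeasurableSpace Ω} (hm : m ≤ m0) {s : Set Ω}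
    (hs : MeasurableSet[m0] s) :
    μ[sᶜ.indicator (1 : Ω → ℝ) | m] =ᵐ[μ] 1 - μ[s.indicator 1 | m] := by
  rw [Set.indicator_compl]
  refine (condExp_sub (integrable_const _) ((integrable_const (1 : ℝ)).indicator hs) m).trans
    ?_
  rw [condExp_const hm]
  rfl

theorem ae_frequently_notMem_of_condExp_eq_one_sub_pow {s : ℕ → Set Ω}
    (hs : ∀ n, MeasurableSet[ℱ n] (s n)) {N : ℕ → ℕ} {q : ℕ → Ω → ℝ} {a : ℕ → ℝ}
    (ha : ∀ n, 0 ≤ a n) (haq : ∀ n ω, a n ≤ q n ω) (hq : ∀ n ω, q n ω ≤ 1)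
    (hdiv : ¬ Summable fun n => N n * a n)
    (hcond : ∀ n, μ[(s (n + 1)).indicator 1 | ℱ n] =ᵐ[μ] fun ω => (1 - q n ω) ^ N n) :
    ∀ᵐ ω ∂μ, ∃ᶠ n in atTop, ω ∉ s (n + 1) := by
  have hc0 (n : ℕ) : 0 ≤ min 1 (N n * a n) / 2 :=
    div_nonneg (le_min zero_le_one (mul_nonneg (N n).cast_nonneg (ha n))) zero_le_two
  refine ae_frequently_mem_of_le_condExp (μ := μ) (s := fun n => (s n)ᶜ)
    (fun n => (hs n).compl) hc0 ?_ fun n => ?_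
  · rw [summable_div_const_iff two_ne_zero]
    exact not_summable_min_one hdiv
  filter_upwards [condExp_indicator_compl_one (ℱ.le n) (ℱ.le _ _ (hs (n + 1))), hcond n]
    with ω hcompl hs_eq
  rw [hcompl, Pi.sub_apply, hs_eq, Pi.one_apply]
  calc min 1 (N n * a n) / 2 ≤ min 1 (N n * q n ω) / 2 := by
        gcongr; exact haq n ω
    _ ≤ 1 - (1 - q n ω) ^ N n :=
      min_one_mul_div_two_le_one_sub_one_sub_pow ((ha n).trans (haq n ω)) (hq n ω) (N n)

end ConditionalBorelCantelli

/-- The paper's `ψ`, so that `P_n = feedback α Θ_n`. -/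
noncomputable def feedback (α θ : ℝ) : ℝ := θ ^ α / (θ ^ α + (1 - θ) ^ α)

section Feedback

variable {α θ : ℝ}

theorem feedback_denom_pos (hθ0 : 0 < θ) (hθ1 : θ < 1) : 0 < θ ^ α + (1 - θ) ^ α := by
  have := Real.rpow_pos_of_pos hθ0 α
  have := Real.rpow_pos_of_pos (sub_pos.mpr hθ1) α
  linarith

theorem one_sub_feedback (hθ0 : 0 < θ) (hθ1 : θ < 1) :
    1 - feedback α θ = feedback α (1 - θ) := by
  have hpos := feedback_denom_pos (α := α) hθ0 hθ1
  rw [feedback, feedback, sub_sub_cancel, one_sub_div hpos.ne', add_comm]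
  ring_nf

theorem rpow_le_feedback (hα : 1 ≤ α) (hθ0 : 0 < θ) (hθ1 : θ < 1) :
    θ ^ α ≤ feedback α θ := by
  have hpos := feedback_denom_pos (α := α) hθ0 hθ1
  have hθα : θ ^ α ≤ θ := Real.rpow_le_self_of_le_one hθ0.le hθ1.le hα
  have h1θα : (1 - θ) ^ α ≤ 1 - θ :=
    Real.rpow_le_self_of_le_one (sub_pos.mpr hθ1).le (by linarith) hα
  rw [feedback, le_div_iff₀ hpos]
  nlinarith [Real.rpow_pos_of_pos hθ0 α]

theorem one_div_rpow_le_feedback {t τ : ℝ} (hα : 1 ≤ α) (ht : 1 ≤ t) (htτ : t < τ) :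
    1 / τ ^ α ≤ feedback α (t / τ) := by
  have hτ : 0 < τ := by linarith
  calc 1 / τ ^ α = (1 / τ) ^ α := by rw [Real.div_rpow zero_le_one hτ.le, Real.one_rpow]
    _ ≤ (t / τ) ^ α := by gcongr
    _ ≤ feedback α (t / τ) :=
      rpow_le_feedback hα (by positivity) ((div_lt_one hτ).mpr htτ)

theorem one_div_rpow_le_one_sub_feedback {t τ : ℝ} (hα : 1 ≤ α) (ht : 1 ≤ t)
    (htτ : t + 1 ≤ τ) : 1 / τ ^ α ≤ 1 - feedback α (t / τ) := by
  have hτ : 0 < τ := by linarith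
  rw [one_sub_feedback (by positivity) ((div_lt_one hτ).mpr (by linarith)),
    one_sub_div hτ.ne']
  exact one_div_rpow_le_feedback hα (by linarith) (by linarith)

end Feedback

theorem pos_and_lt_of_increments_le {t τ b σ : ℕ → ℕ}
    (ht : ∀ n, t (n + 1) = t n + b (n + 1)) (hτ : ∀ n, τ (n + 1) = τ n + σ (n + 1))
    (hb : ∀ n, b (n + 1) ≤ σ (n + 1)) (h0 : 0 < t 0) (h0τ : t 0 < τ 0) (n : ℕ) :
    0 < t n ∧ t n < τ n := by
  induction n with
  | zero => exact ⟨h0, h0τ⟩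
  | succ n ih => rw [ht, hτ]; have := hb n; omega

theorem stmt12_general {Ω : Type*} {m0 : MeasurableSpace Ω} {μ : Measure Ω}
    [IsProbabilityMeasure μ] (ℱ : Filtration ℕ m0)
    (α : ℝ) (hα : 1 < α)
    (σn τn : ℕ → ℕ)
    (hτrec : ∀ n, τn (n + 1) = τn n + σn (n + 1))
    (T B : ℕ → Ω → ℕ) (T0 : ℕ) (hT0pos : 0 < T0) (hT0lt : T0 < τn 0)
    (hT0 : ∀ ω, T 0 ω = T0)
    (hTrec : ∀ n ω, T (n + 1) ω = T n ω + B (n + 1) ω)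
    (hBmeas : ∀ n, StronglyMeasurable[ℱ n] (B n))
    (hBle : ∀ n ω, B (n + 1) ω ≤ σn (n + 1))
    (hbinom : ∀ n, ∀ k ≤ σn (n + 1),
      μ[Set.indicator {ω | B (n + 1) ω = k} (fun _ => (1 : ℝ)) | ℱ n] =ᵐ[μ]
        fun ω => ((σn (n + 1)).choose k : ℝ) *
          (((T n ω : ℝ) / (τn n : ℝ)) ^ α /
            (((T n ω : ℝ) / (τn n : ℝ)) ^ α + (1 - (T n ω : ℝ) / (τn n : ℝ)) ^ α)) ^ k *
          (1 - ((T n ω : ℝ) / (τn n : ℝ)) ^ α /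
            (((T n ω : ℝ) / (τn n : ℝ)) ^ α + (1 - (T n ω : ℝ) / (τn n : ℝ)) ^ α))
            ^ (σn (n + 1) - k))
    (hdiv : ¬ Summable (fun n => (σn (n + 1) : ℝ) / ((τn n : ℝ)) ^ α)) :
    μ {ω | (∀ᶠ n in atTop, B (n + 1) ω = 0) ∨
        (∀ᶠ n in atTop, B (n + 1) ω = σn (n + 1))} = 0 := by
  have hcount (n : ℕ) (ω : Ω) : 1 ≤ (T n ω : ℝ) ∧ (T n ω : ℝ) + 1 ≤ τn n := by
    obtain ⟨hpos, hlt⟩ := pos_and_lt_of_increments_le (t := (T · ω)) (b := (B · ω))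
      (fun k => hTrec k ω) hτrec (fun k => hBle k ω) (by rwa [hT0]) (by rwa [hT0]) n
    exact ⟨by exact_mod_cast hpos, by exact_mod_cast hlt⟩
  set P : ℕ → Ω → ℝ := fun n ω => feedback α ((T n ω : ℝ) / τn n) with hP
  have hP_ge (n : ℕ) (ω : Ω) : 1 / (τn n : ℝ) ^ α ≤ P n ω :=
    one_div_rpow_le_feedback hα.le (hcount n ω).1 (by linarith [hcount n ω])
  have hcompl_ge (n : ℕ) (ω : Ω) : 1 / (τn n : ℝ) ^ α ≤ 1 - P n ω :=
    one_div_rpow_le_one_sub_feedback hα.le (hcount n ω).1 (hcount n ω).2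
  have ha (n : ℕ) : 0 ≤ 1 / (τn n : ℝ) ^ α := by positivity
  have hdiv' : ¬ Summable fun n => (σn (n + 1) : ℝ) * (1 / (τn n : ℝ) ^ α) := by
    simpa only [mul_one_div] using hdiv
  have hlevel (n j : ℕ) : MeasurableSet[ℱ n] {ω | B n ω = j} :=
    (hBmeas n).measurable (measurableSet_singleton j)
  have hbin1_often : ∀ᵐ ω ∂μ, ∃ᶠ n in atTop, ω ∉ {ω | B (n + 1) ω = 0} :=
    ae_frequently_notMem_of_condExp_eq_one_sub_pow (fun n => hlevel n 0) ha hP_ge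
      (fun n ω => by linarith [hcompl_ge n ω, ha n]) hdiv' fun n =>
      (hbinom n 0 (Nat.zero_le _)).trans (.of_forall fun ω => by simp [hP, feedback])
  have hbin2_often : ∀ᵐ ω ∂μ, ∃ᶠ n in atTop, ω ∉ {ω | B (n + 1) ω = σn (n + 1)} :=
    ae_frequently_notMem_of_condExp_eq_one_sub_pow (fun n => hlevel n (σn n)) ha hcompl_ge
      (fun n ω => by linarith [hP_ge n ω, ha n]) hdiv' fun n =>
      (hbinom n _ le_rfl).trans (.of_forall fun ω => by simp [hP, feedback])
  rw [measure_eq_zero_iff_ae_notMem]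
  filter_upwards [hbin1_often, hbin2_often] with ω h1 h2
  rintro (h | h)
  · exact h1 (h.mono fun _ hn hne => hne hn)
  · exact h2 (h.mono fun _ hn hne => hne hn)

/-- in the balls-and-bins model with feedback exponent α > 1, where
P_n = Θ_n^α/(Θ_n^α + (1-Θ_n)^α) with Θ_n = T_n/τ_n, if ∑ σ_{n+1}/τ_n^α = ∞ then
the probability of monopoly is zero. -/
theorem stmt12 {Ω : Type*} {m0 : MeasurableSpace Ω} {μ : Measure Ω}
    [IsProbabilityMeasure μ] (ℱ : Filtration ℕ m0)
    (α : ℝ) (hα : 1 < α)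
    (σn τn : ℕ → ℕ) (hσ : ∀ n, 1 ≤ σn n)
    (hτrec : ∀ n, τn (n + 1) = τn n + σn (n + 1))
    (T B : ℕ → Ω → ℕ) (T0 : ℕ) (hT0pos : 0 < T0) (hT0lt : T0 < τn 0)
    (hT0 : ∀ ω, T 0 ω = T0)
    (hTrec : ∀ n ω, T (n + 1) ω = T n ω + B (n + 1) ω)
    (hTmeas : ∀ n, StronglyMeasurable[ℱ n] (T n))
    (hBmeas : ∀ n, StronglyMeasurable[ℱ n] (B n))
    (hBle : ∀ n ω, B (n + 1) ω ≤ σn (n + 1))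
    (hbinom : ∀ n, ∀ k ≤ σn (n + 1),
      μ[Set.indicator {ω | B (n + 1) ω = k} (fun _ => (1 : ℝ)) | ℱ n] =ᵐ[μ]
        fun ω => ((σn (n + 1)).choose k : ℝ) *
          (((T n ω : ℝ) / (τn n : ℝ)) ^ α /
            (((T n ω : ℝ) / (τn n : ℝ)) ^ α + (1 - (T n ω : ℝ) / (τn n : ℝ)) ^ α)) ^ k *
          (1 - ((T n ω : ℝ) / (τn n : ℝ)) ^ α /
            (((T n ω : ℝ) / (τn n : ℝ)) ^ α + (1 - (T n ω : ℝ) / (τn n : ℝ)) ^ α))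
            ^ (σn (n + 1) - k))
    (hdiv : ¬ Summable (fun n => (σn (n + 1) : ℝ) / ((τn n : ℝ)) ^ α)) :
    μ {ω | (∀ᶠ n in atTop, B (n + 1) ω = 0) ∨
        (∀ᶠ n in atTop, B (n + 1) ω = σn (n + 1))} = 0 :=
  stmt12_general ℱ α hα σn τn hτrec T B T0 hT0pos hT0lt hT0 hTrec hBmeas hBle hbinom hdiv
end

section
/- Let (ξ_n) be adapted to (F_n) and (ε_n) satisfy E[ε_{n+1}|F_n] = 0, E[ε_{n+1}²|F_n] = 1. Suppose |ξ_i| ≤ ζ_n a_i almost surely for all i ≥ n and all n, where ζ_n > 0 is F_n-measurable and square-integrable, and (a_n) is a deterministic square-summable sequence. Then almost surely the series ∑_{i≥0} ξ_i ε_{i+1} converges, and liminf_{n→∞} (ζ_n √A_n)^{-1} ∑_{i≥n} ξ_i ε_{i+1} < ∞, where A_n = ∑_{i≥n} a_i². -/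
/-!
The partial sums `S m = ∑_{i<m} ξ i * ε (i + 1)` form a martingale whose increments stay
orthogonal after weighting by any bounded `ℱ n`-measurable `g ≥ 0`, and the conditional variance
of `ε` turns `E[(ξ i ε (i+1))² g]` into `E[ξ i² g] ≤ a i² E[ζ n² g]`. Hence
`E[(S m - S n)² g] ≤ A n E[ζ n² g]`. With `g = 1` and `n = 0` the martingale is bounded in L²,
so it converges a.s. to some `L`. With `g = (ζ n √(A n))⁻²` Fatou gives
`E[((L - S n) / (ζ n √(A n)))²] ≤ 1` for every `n`, so by Chebyshev the normalised tails exceed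
`k` with probability at most `1 / k²` uniformly in `n`, which forces their liminf to be finite a.s.
-/

open MeasureTheory Filter
open scoped ENNReal Topology

section CondExp

variable {Ω : Type*} {m m0 : MeasurableSpace Ω} {μ : Measure Ω}

theorem lintegral_mul_ofReal_eq_of_condExp_eq_one [IsFiniteMeasure μ] (hm : m ≤ m0)
    {ψ : Ω → ℝ} (hψ0 : 0 ≤ᵐ[μ] ψ) (hψ : Integrable ψ μ) (hψm : μ[ψ|m] =ᵐ[μ] fun _ => 1)
    {h : Ω → ℝ≥0∞} (hh : Measurable[m] h) :
    ∫⁻ ω, h ω * ENNReal.ofReal (ψ ω) ∂μ = ∫⁻ ω, h ω ∂μ := by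
  have htrim : (μ.withDensity fun ω => ENNReal.ofReal (ψ ω)).trim hm = μ.trim hm := by
    refine @Measure.ext _ m _ _ fun s hs => ?_
    rw [trim_measurableSet_eq hm hs, trim_measurableSet_eq hm hs, withDensity_apply _ (hm s hs),
      ← ofReal_integral_eq_lintegral_ofReal hψ.integrableOn (ae_restrict_of_ae hψ0),
      ← setIntegral_condExp hm hψ hs, setIntegral_congr_ae (hm s hs) (hψm.mono fun _ h _ => h)]
    simp [measureReal_def]
  calc ∫⁻ ω, h ω * ENNReal.ofReal (ψ ω) ∂μ
      = ∫⁻ ω, h ω ∂μ.withDensity fun ω => ENNReal.ofReal (ψ ω) := by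
        rw [lintegral_withDensity_eq_lintegral_mul₀ hψ.1.aemeasurable.ennreal_ofReal
          (hh.mono hm le_rfl).aemeasurable]
        simp only [Pi.mul_apply, mul_comm]
    _ = ∫⁻ ω, h ω ∂μ := by rw [← lintegral_trim hm hh, htrim, lintegral_trim hm hh]

theorem integral_mul_eq_of_condExp_eq_const (hm : m ≤ m0) [SigmaFinite (μ.trim hm)]
    {f e : Ω → ℝ} {c : ℝ} (hf : StronglyMeasurable[m] f) (hfe : Integrable (f * e) μ)
    (he : Integrable e μ) (hec : μ[e|m] =ᵐ[μ] fun _ => c) :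
    ∫ ω, f ω * e ω ∂μ = c * ∫ ω, f ω ∂μ := by
  have hpull : μ[f * e|m] =ᵐ[μ] fun ω => c * f ω := by
    filter_upwards [condExp_mul_of_stronglyMeasurable_left hf hfe he, hec] with ω h1 h2
    rw [h1, Pi.mul_apply, h2, mul_comm]
  calc ∫ ω, f ω * e ω ∂μ = ∫ ω, (μ[f * e|m]) ω ∂μ := (integral_condExp hm).symm
    _ = c * ∫ ω, f ω ∂μ := by rw [integral_congr_ae hpull, integral_const_mul]

end CondExp

section Limits

variable {Ω : Type*} {m0 : MeasurableSpace Ω} {μ : Measure Ω}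

theorem lintegral_ofReal_le_of_tendsto {F : ℕ → Ω → ℝ} {f : Ω → ℝ} {c : ℝ≥0∞}
    (hF : ∀ n, AEMeasurable (F n) μ) (hFf : ∀ᵐ ω ∂μ, Tendsto (fun n => F n ω) atTop (𝓝 (f ω)))
    (hc : ∀ᶠ n in atTop, ∫⁻ ω, ENNReal.ofReal (F n ω) ∂μ ≤ c) :
    ∫⁻ ω, ENNReal.ofReal (f ω) ∂μ ≤ c :=
  calc ∫⁻ ω, ENNReal.ofReal (f ω) ∂μ
      = ∫⁻ ω, liminf (fun n => ENNReal.ofReal (F n ω)) atTop ∂μ :=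
        lintegral_congr_ae <| hFf.mono fun _ h =>
          ((ENNReal.continuous_ofReal.tendsto _).comp h).liminf_eq.symm
    _ ≤ liminf (fun n => ∫⁻ ω, ENNReal.ofReal (F n ω) ∂μ) atTop :=
        lintegral_liminf_le' fun n => (hF n).ennreal_ofReal
    _ ≤ c := liminf_le_of_frequently_le' hc.frequently

theorem MeasureTheory.Martingale.ae_tendsto_limitProcess_of_integral_sq_le [IsFiniteMeasure μ]
    {ℱ : Filtration ℕ m0} {S : ℕ → Ω → ℝ} (hS : Martingale S ℱ μ) (hS2 : ∀ n, MemLp (S n) 2 μ)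
    {B : ℝ} (hB : ∀ n, ∫ ω, S n ω ^ 2 ∂μ ≤ B) :
    ∀ᵐ ω ∂μ, Tendsto (fun n => S n ω) atTop (𝓝 (ℱ.limitProcess S μ ω)) := by
  refine hS.submartingale.ae_tendsto_limitProcess (R := (μ.real Set.univ + B).toNNReal) fun n => ?_
  have hsq : Integrable (fun ω => 1 + S n ω ^ 2) μ :=
    (integrable_const 1).add ((memLp_two_iff_integrable_sq (hS2 n).1).1 (hS2 n))
  calc eLpNorm (S n) 1 μ = ∫⁻ ω, ‖S n ω‖ₑ ∂μ := eLpNorm_one_eq_lintegral_enorm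
    _ ≤ ∫⁻ ω, ENNReal.ofReal (1 + S n ω ^ 2) ∂μ := lintegral_mono fun ω => by
        rw [Real.enorm_eq_ofReal_abs]
        exact ENNReal.ofReal_le_ofReal (by nlinarith [sq_abs (S n ω), sq_nonneg (|S n ω| - 1)])
    _ = ENNReal.ofReal (∫ ω, 1 + S n ω ^ 2 ∂μ) :=
        (ofReal_integral_eq_lintegral_ofReal hsq (ae_of_all _ fun _ => by positivity)).symm
    _ ≤ ENNReal.ofReal (μ.real Set.univ + B) := by
        refine ENNReal.ofReal_le_ofReal ?_
        rw [integral_add (integrable_const 1) ((memLp_two_iff_integrable_sq (hS2 n).1).1 (hS2 n)),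
          integral_const, smul_eq_mul, mul_one]
        linarith [hB n]

theorem integral_sq_mul_min_inv_sq_le [IsFiniteMeasure μ] (f : Ω → ℝ) (M : ℕ) :
    ∫ ω, f ω ^ 2 * min (f ω ^ 2)⁻¹ M ∂μ ≤ μ.real Set.univ := by
  have hbound : ∀ ω, ‖f ω ^ 2 * min (f ω ^ 2)⁻¹ M‖ ≤ 1 := fun ω => by
    rw [Real.norm_of_nonneg (by positivity)]
    exact (mul_le_mul_of_nonneg_left (min_le_left _ _) (sq_nonneg _)).trans mul_inv_le_one
  simpa using (le_abs_self _).trans (norm_integral_le_of_norm_le_const (ae_of_all μ hbound))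

theorem ofReal_sq_mul_measure_lt_le_lintegral {X : Ω → ℝ} (hX : AEMeasurable X μ) (c : ℝ) :
    ENNReal.ofReal c ^ 2 * μ {ω | c < X ω} ≤ ∫⁻ ω, ENNReal.ofReal (X ω ^ 2) ∂μ := by
  rcases lt_or_ge c 0 with hc | hc
  · simp [ENNReal.ofReal_of_nonpos hc.le]
  calc ENNReal.ofReal c ^ 2 * μ {ω | c < X ω}
      ≤ ENNReal.ofReal c ^ 2 * μ {ω | ENNReal.ofReal c ^ 2 ≤ ENNReal.ofReal (X ω ^ 2)} := by
        refine mul_le_mul_right (measure_mono fun ω (hω : c < X ω) => ?_) _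
        rw [Set.mem_ofPred_eq, ← ENNReal.ofReal_pow hc]
        exact ENNReal.ofReal_le_ofReal (pow_le_pow_left₀ hc hω.le 2)
    _ ≤ ∫⁻ ω, ENNReal.ofReal (X ω ^ 2) ∂μ :=
        mul_meas_ge_le_lintegral₀ (hX.pow_const 2).ennreal_ofReal _

theorem ae_exists_frequently_le_of_lintegral_sq_le {X : ℕ → Ω → ℝ}
    (hX : ∀ n, AEMeasurable (X n) μ) {C : ℝ≥0∞} (hC : C ≠ ∞)
    (hXC : ∀ n, ∫⁻ ω, ENNReal.ofReal (X n ω ^ 2) ∂μ ≤ C) :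
    ∀ᵐ ω ∂μ, ∃ c : ℝ, ∃ᶠ n in atTop, X n ω ≤ c := by
  have hcheb : ∀ n {k : ℕ}, k ≠ 0 → μ {ω | (k : ℝ) < X n ω} ≤ C / (k : ℝ≥0∞) ^ 2 := by
    intro n k hk
    rw [ENNReal.le_div_iff_mul_le (Or.inl (by simp [hk])) (Or.inl (by simp)), mul_comm]
    simpa using (ofReal_sq_mul_measure_lt_le_lintegral (hX n) (k : ℝ)).trans (hXC n)
  have hbad : ∀ {k : ℕ}, k ≠ 0 →
      μ {ω | ∀ᶠ n in atTop, (k : ℝ) < X n ω} ≤ C / (k : ℝ≥0∞) ^ 2 := by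
    intro k hk
    have hmono : Monotone fun N => {ω | ∀ n ≥ N, (k : ℝ) < X n ω} :=
      fun N N' hN ω (hω : ∀ n ≥ N, (k : ℝ) < X n ω) n hn => hω n (hN.trans hn)
    have hset : {ω | ∀ᶠ n in atTop, (k : ℝ) < X n ω} = ⋃ N, {ω | ∀ n ≥ N, (k : ℝ) < X n ω} := by
      ext ω
      simp only [eventually_atTop, Set.mem_ofPred_eq, Set.mem_iUnion]
    rw [hset, hmono.measure_iUnion]
    refine iSup_le fun N => le_trans (measure_mono ?_) (hcheb N hk)
    exact fun ω (hω : ∀ n ≥ N, (k : ℝ) < X n ω) => hω N le_rfl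
  have hnull : μ (⋂ k : ℕ, {ω | ∀ᶠ n in atTop, (k : ℝ) < X n ω}) = 0 := by
    have hlim : Tendsto (fun k : ℕ => C / (k : ℝ≥0∞) ^ 2) atTop (𝓝 0) := by
      simpa [div_eq_mul_inv, ENNReal.inv_pow] using ENNReal.Tendsto.const_mul
        (ENNReal.Tendsto.pow (n := 2) ENNReal.tendsto_inv_nat_nhds_zero) (Or.inr hC)
    refine le_antisymm (ge_of_tendsto hlim ?_) bot_le
    filter_upwards [eventually_ne_atTop 0] with k hk
    exact (measure_mono (Set.iInter_subset _ k)).trans (hbad hk)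
  filter_upwards [measure_eq_zero_iff_ae_notMem.1 hnull] with ω hω
  simp only [Set.mem_iInter, Set.mem_ofPred_eq, not_forall, not_eventually, not_lt] at hω
  obtain ⟨k, hk⟩ := hω
  exact ⟨k, hk⟩

end Limits

theorem sum_Ico_le_tsum_add {f : ℕ → ℝ} (hf : Summable f) (hf0 : ∀ i, 0 ≤ f i) (n m : ℕ) :
    ∑ i ∈ Finset.Ico n m, f i ≤ ∑' i, f (n + i) := by
  rw [Finset.sum_Ico_eq_sum_range]
  exact (hf.comp_injective (add_right_injective n)).sum_le_tsum _ fun i _ => hf0 (n + i)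

section Noise

variable {Ω : Type*} {m0 : MeasurableSpace Ω} {μ : Measure Ω}

structure IsStandardMartingaleDifference (ℱ : Filtration ℕ m0) (ε : ℕ → Ω → ℝ)
    (μ : Measure Ω) : Prop where
  stronglyAdapted : StronglyAdapted ℱ ε
  integrable : ∀ n, Integrable (ε (n + 1)) μ
  integrable_sq : ∀ n, Integrable (fun ω => ε (n + 1) ω ^ 2) μ
  condExp_eq_zero : ∀ n, μ[ε (n + 1)|ℱ n] =ᵐ[μ] fun _ => 0
  condExp_sq_eq_one : ∀ n, μ[fun ω => ε (n + 1) ω ^ 2|ℱ n] =ᵐ[μ] fun _ => 1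

namespace IsStandardMartingaleDifference

variable [IsFiniteMeasure μ] {ℱ : Filtration ℕ m0} {ε ξ : ℕ → Ω → ℝ}

theorem memLp_mul (hε : IsStandardMartingaleDifference ℱ ε μ) (hξ : StronglyAdapted ℱ ξ)
    {i : ℕ} (hξ2 : MemLp (ξ i) 2 μ) : MemLp (fun ω => ξ i ω * ε (i + 1) ω) 2 μ := by
  have hmeas : AEStronglyMeasurable (fun ω => ξ i ω * ε (i + 1) ω) μ :=
    ((hξ i).mono (ℱ.le i)).aestronglyMeasurable.mul
      ((hε.stronglyAdapted (i + 1)).mono (ℱ.le _)).aestronglyMeasurable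
  refine (memLp_two_iff_integrable_sq hmeas).2 ⟨hmeas.pow 2, ?_⟩
  have hlint := lintegral_mul_ofReal_eq_of_condExp_eq_one (ℱ.le i)
    (ae_of_all _ fun ω => sq_nonneg (ε (i + 1) ω)) (hε.integrable_sq i) (hε.condExp_sq_eq_one i)
    ((hξ i).measurable.pow_const 2).ennreal_ofReal
  rw [hasFiniteIntegral_iff_ofReal (ae_of_all _ fun ω => sq_nonneg _)]
  simp_rw [mul_pow, ENNReal.ofReal_mul (sq_nonneg _), hlint]
  exact ((memLp_two_iff_integrable_sq hξ2.1).1 hξ2).lintegral_lt_top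

theorem memLp_sum (hε : IsStandardMartingaleDifference ℱ ε μ) (hξ : StronglyAdapted ℱ ξ)
    (hξ2 : ∀ i, MemLp (ξ i) 2 μ) (s : Finset ℕ) :
    MemLp (fun ω => ∑ i ∈ s, ξ i ω * ε (i + 1) ω) 2 μ :=
  memLp_finsetSum s fun i _ => hε.memLp_mul hξ (hξ2 i)

theorem martingale_sum (hε : IsStandardMartingaleDifference ℱ ε μ) (hξ : StronglyAdapted ℱ ξ)
    (hξ2 : ∀ i, MemLp (ξ i) 2 μ) :
    Martingale (fun n ω => ∑ i ∈ Finset.range n, ξ i ω * ε (i + 1) ω) ℱ μ := by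
  refine martingale_of_condExp_sub_eq_zero_nat (fun n => ?_)
    (fun n => (hε.memLp_sum hξ hξ2 _).integrable one_le_two) fun n => ?_
  · refine Finset.stronglyMeasurable_fun_sum _ fun i hi => ?_
    have hin : i + 1 ≤ n := Finset.mem_range.1 hi
    exact ((hξ i).mono (ℱ.mono (by omega))).mul ((hε.stronglyAdapted (i + 1)).mono (ℱ.mono hin))
  have hincr : (fun ω => ∑ i ∈ Finset.range (n + 1), ξ i ω * ε (i + 1) ω) -
      (fun ω => ∑ i ∈ Finset.range n, ξ i ω * ε (i + 1) ω) = ξ n * ε (n + 1) := by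
    ext ω
    simp [Finset.sum_range_succ]
  rw [hincr]
  filter_upwards [condExp_mul_of_stronglyMeasurable_left (hξ n)
    ((hε.memLp_mul hξ (hξ2 n)).integrable one_le_two) (hε.integrable n),
    hε.condExp_eq_zero n] with ω h1 h2
  simp [h1, h2]

theorem integrable_mul_mul (hε : IsStandardMartingaleDifference ℱ ε μ)
    (hξ : StronglyAdapted ℱ ξ) (hξ2 : ∀ i, MemLp (ξ i) 2 μ) {g : Ω → ℝ} {C : ℝ}
    (hg : AEStronglyMeasurable g μ) (hgC : ∀ ω, ‖g ω‖ ≤ C) (i j : ℕ) :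
    Integrable (fun ω => ξ i ω * ε (i + 1) ω * (ξ j ω * ε (j + 1) ω) * g ω) μ :=
  ((hε.memLp_mul hξ (hξ2 i)).integrable_mul (hε.memLp_mul hξ (hξ2 j))).mul_bdd hg
    (ae_of_all _ hgC)

theorem integral_mul_mul_eq_zero (hε : IsStandardMartingaleDifference ℱ ε μ)
    (hξ : StronglyAdapted ℱ ξ) (hξ2 : ∀ i, MemLp (ξ i) 2 μ) {n i j : ℕ} {g : Ω → ℝ} {C : ℝ}
    (hg : StronglyMeasurable[ℱ n] g) (hgC : ∀ ω, ‖g ω‖ ≤ C) (hni : n ≤ i) (hij : i < j) :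
    ∫ ω, ξ i ω * ε (i + 1) ω * (ξ j ω * ε (j + 1) ω) * g ω ∂μ = 0 := by
  have hfm : StronglyMeasurable[ℱ j] fun ω => ξ i ω * ε (i + 1) ω * ξ j ω * g ω :=
    ((((hξ i).mono (ℱ.mono hij.le)).mul ((hε.stronglyAdapted (i + 1)).mono (ℱ.mono hij))).mul
      (hξ j)).mul (hg.mono (ℱ.mono (hni.trans hij.le)))
  have hfe : Integrable ((fun ω => ξ i ω * ε (i + 1) ω * ξ j ω * g ω) * ε (j + 1)) μ :=
    (hε.integrable_mul_mul hξ hξ2 (hg.mono (ℱ.le n)).aestronglyMeasurable hgC i j).congr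
      (ae_of_all _ fun ω => by simp only [Pi.mul_apply]; ring)
  calc ∫ ω, ξ i ω * ε (i + 1) ω * (ξ j ω * ε (j + 1) ω) * g ω ∂μ
      = ∫ ω, ξ i ω * ε (i + 1) ω * ξ j ω * g ω * ε (j + 1) ω ∂μ :=
        integral_congr_ae (ae_of_all _ fun ω => by ring)
    _ = 0 := by
        rw [integral_mul_eq_of_condExp_eq_const (ℱ.le j) hfm hfe (hε.integrable j)
          (hε.condExp_eq_zero j), zero_mul]

theorem integral_mul_self_mul (hε : IsStandardMartingaleDifference ℱ ε μ)
    (hξ : StronglyAdapted ℱ ξ) (hξ2 : ∀ i, MemLp (ξ i) 2 μ) {n i : ℕ} {g : Ω → ℝ} {C : ℝ}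
    (hg : StronglyMeasurable[ℱ n] g) (hgC : ∀ ω, ‖g ω‖ ≤ C) (hni : n ≤ i) :
    ∫ ω, ξ i ω * ε (i + 1) ω * (ξ i ω * ε (i + 1) ω) * g ω ∂μ = ∫ ω, ξ i ω ^ 2 * g ω ∂μ := by
  have hfm : StronglyMeasurable[ℱ i] fun ω => ξ i ω ^ 2 * g ω :=
    ((hξ i).pow 2).mul (hg.mono (ℱ.mono hni))
  have hfe : Integrable ((fun ω => ξ i ω ^ 2 * g ω) * fun ω => ε (i + 1) ω ^ 2) μ :=
    (hε.integrable_mul_mul hξ hξ2 (hg.mono (ℱ.le n)).aestronglyMeasurable hgC i i).congr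
      (ae_of_all _ fun ω => by simp only [Pi.mul_apply]; ring)
  calc ∫ ω, ξ i ω * ε (i + 1) ω * (ξ i ω * ε (i + 1) ω) * g ω ∂μ
      = ∫ ω, ξ i ω ^ 2 * g ω * ε (i + 1) ω ^ 2 ∂μ :=
        integral_congr_ae (ae_of_all _ fun ω => by ring)
    _ = ∫ ω, ξ i ω ^ 2 * g ω ∂μ := by
        rw [integral_mul_eq_of_condExp_eq_const (ℱ.le i) hfm hfe (hε.integrable_sq i)
          (hε.condExp_sq_eq_one i), one_mul]

theorem integral_sq_sum_mul (hε : IsStandardMartingaleDifference ℱ ε μ)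
    (hξ : StronglyAdapted ℱ ξ) (hξ2 : ∀ i, MemLp (ξ i) 2 μ) {n : ℕ} {g : Ω → ℝ} {C : ℝ}
    (hg : StronglyMeasurable[ℱ n] g) (hgC : ∀ ω, ‖g ω‖ ≤ C) (m : ℕ) :
    ∫ ω, (∑ i ∈ Finset.Ico n m, ξ i ω * ε (i + 1) ω) ^ 2 * g ω ∂μ =
      ∑ i ∈ Finset.Ico n m, ∫ ω, ξ i ω ^ 2 * g ω ∂μ := by
  set u : ℕ → Ω → ℝ := fun i ω => ξ i ω * ε (i + 1) ω
  have hint := hε.integrable_mul_mul hξ hξ2 (hg.mono (ℱ.le n)).aestronglyMeasurable hgC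
  calc ∫ ω, (∑ i ∈ Finset.Ico n m, u i ω) ^ 2 * g ω ∂μ
      = ∫ ω, ∑ i ∈ Finset.Ico n m, ∑ j ∈ Finset.Ico n m, u i ω * u j ω * g ω ∂μ := by
        simp_rw [sq, Finset.sum_mul_sum, Finset.sum_mul]
    _ = ∑ i ∈ Finset.Ico n m, ∑ j ∈ Finset.Ico n m, ∫ ω, u i ω * u j ω * g ω ∂μ := by
        rw [integral_finsetSum _ fun i _ => integrable_finsetSum _ fun j _ => hint i j]
        exact Finset.sum_congr rfl fun i _ => integral_finsetSum _ fun j _ => hint i j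
    _ = ∑ i ∈ Finset.Ico n m, ∫ ω, u i ω * u i ω * g ω ∂μ := by
        refine Finset.sum_congr rfl fun i hi => Finset.sum_eq_single_of_mem i hi fun j hj hji => ?_
        rcases hji.lt_or_gt with hji | hij
        · simp_rw [mul_comm (u i _) (u j _)]
          exact hε.integral_mul_mul_eq_zero hξ hξ2 hg hgC (Finset.mem_Ico.1 hj).1 hji
        · exact hε.integral_mul_mul_eq_zero hξ hξ2 hg hgC (Finset.mem_Ico.1 hi).1 hij
    _ = ∑ i ∈ Finset.Ico n m, ∫ ω, ξ i ω ^ 2 * g ω ∂μ :=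
        Finset.sum_congr rfl fun i hi =>
          hε.integral_mul_self_mul hξ hξ2 hg hgC (Finset.mem_Ico.1 hi).1

theorem integral_sq_sum_mul_le (hε : IsStandardMartingaleDifference ℱ ε μ)
    (hξ : StronglyAdapted ℱ ξ) (hξ2 : ∀ i, MemLp (ξ i) 2 μ) {n : ℕ} {ζ : Ω → ℝ} {a : ℕ → ℝ}
    (hζ : MemLp ζ 2 μ) (hdom : ∀ i ≥ n, ∀ᵐ ω ∂μ, |ξ i ω| ≤ ζ ω * a i) {g : Ω → ℝ} {C : ℝ}
    (hg : StronglyMeasurable[ℱ n] g) (hg0 : ∀ ω, 0 ≤ g ω) (hgC : ∀ ω, ‖g ω‖ ≤ C) (m : ℕ) :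
    ∫ ω, (∑ i ∈ Finset.Ico n m, ξ i ω * ε (i + 1) ω) ^ 2 * g ω ∂μ ≤
      (∑ i ∈ Finset.Ico n m, a i ^ 2) * ∫ ω, ζ ω ^ 2 * g ω ∂μ := by
  have hgm : AEStronglyMeasurable g μ := (hg.mono (ℱ.le n)).aestronglyMeasurable
  rw [hε.integral_sq_sum_mul hξ hξ2 hg hgC, Finset.sum_mul]
  refine Finset.sum_le_sum fun i hi => ?_
  rw [← integral_const_mul]
  refine integral_mono_ae
    (((memLp_two_iff_integrable_sq (hξ2 i).1).1 (hξ2 i)).mul_bdd hgm (ae_of_all _ hgC))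
    ((((memLp_two_iff_integrable_sq hζ.1).1 hζ).mul_bdd hgm (ae_of_all _ hgC)).const_mul _) ?_
  filter_upwards [hdom i (Finset.mem_Ico.1 hi).1] with ω hω
  have hsq : ξ i ω ^ 2 ≤ (ζ ω * a i) ^ 2 := by
    rw [← sq_abs]
    exact pow_le_pow_left₀ (abs_nonneg _) hω 2
  calc ξ i ω ^ 2 * g ω ≤ (ζ ω * a i) ^ 2 * g ω := mul_le_mul_of_nonneg_right hsq (hg0 ω)
    _ = a i ^ 2 * (ζ ω ^ 2 * g ω) := by ring

theorem ae_tendsto_limitProcess_sum (hε : IsStandardMartingaleDifference ℱ ε μ)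
    (hξ : StronglyAdapted ℱ ξ) (hξ2 : ∀ i, MemLp (ξ i) 2 μ) {ζ : Ω → ℝ} {a : ℕ → ℝ}
    (ha : Summable fun i => a i ^ 2) (hζ : MemLp ζ 2 μ)
    (hdom : ∀ i, ∀ᵐ ω ∂μ, |ξ i ω| ≤ ζ ω * a i) :
    ∀ᵐ ω ∂μ, Tendsto (fun m => ∑ i ∈ Finset.range m, ξ i ω * ε (i + 1) ω) atTop
      (𝓝 (ℱ.limitProcess (fun m ω => ∑ i ∈ Finset.range m, ξ i ω * ε (i + 1) ω) μ ω)) := by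
  refine (hε.martingale_sum hξ hξ2).ae_tendsto_limitProcess_of_integral_sq_le
    (fun m => hε.memLp_sum hξ hξ2 _) (B := (∑' i, a i ^ 2) * ∫ ω, ζ ω ^ 2 ∂μ) fun m => ?_
  have hbound := hε.integral_sq_sum_mul_le hξ hξ2 hζ (n := 0) (fun i _ => hdom i)
    stronglyMeasurable_const (fun _ => zero_le_one) (fun _ => norm_one.le) m
  simp only [mul_one, ← Finset.range_eq_Ico] at hbound
  refine hbound.trans (mul_le_mul_of_nonneg_right ?_ (integral_nonneg fun ω => sq_nonneg _))
  simpa using sum_Ico_le_tsum_add ha (fun i => sq_nonneg (a i)) 0 m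

theorem lintegral_sq_tail_mul_le (hε : IsStandardMartingaleDifference ℱ ε μ)
    (hξ : StronglyAdapted ℱ ξ) (hξ2 : ∀ i, MemLp (ξ i) 2 μ) {n : ℕ} {ζ : Ω → ℝ} {a : ℕ → ℝ}
    (ha : Summable fun i => a i ^ 2) (hζ : MemLp ζ 2 μ)
    (hdom : ∀ i ≥ n, ∀ᵐ ω ∂μ, |ξ i ω| ≤ ζ ω * a i) {L : Ω → ℝ}
    (hL : ∀ᵐ ω ∂μ, Tendsto (fun m => ∑ i ∈ Finset.range m, ξ i ω * ε (i + 1) ω) atTop (𝓝 (L ω)))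
    {g : Ω → ℝ} {C : ℝ} (hg : StronglyMeasurable[ℱ n] g) (hg0 : ∀ ω, 0 ≤ g ω)
    (hgC : ∀ ω, ‖g ω‖ ≤ C) :
    ∫⁻ ω, ENNReal.ofReal ((L ω - ∑ i ∈ Finset.range n, ξ i ω * ε (i + 1) ω) ^ 2 * g ω) ∂μ ≤
      ENNReal.ofReal ((∑' i, a (n + i) ^ 2) * ∫ ω, ζ ω ^ 2 * g ω ∂μ) := by
  set S : ℕ → Ω → ℝ := fun m ω => ∑ i ∈ Finset.range m, ξ i ω * ε (i + 1) ω
  have hgm : AEStronglyMeasurable g μ := (hg.mono (ℱ.le n)).aestronglyMeasurable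
  refine lintegral_ofReal_le_of_tendsto (F := fun m ω => (S m ω - S n ω) ^ 2 * g ω)
    (fun m => ((((hε.memLp_sum hξ hξ2 _).1.sub (hε.memLp_sum hξ hξ2 _).1).pow 2).mul
      hgm).aemeasurable) ?_ ?_
  · filter_upwards [hL] with ω hω
    exact ((hω.sub_const _).pow 2).mul_const _
  filter_upwards [eventually_ge_atTop n] with m hm
  have hIco : ∀ ω, S m ω - S n ω = ∑ i ∈ Finset.Ico n m, ξ i ω * ε (i + 1) ω := fun ω =>
    (Finset.sum_Ico_eq_sub _ hm).symm
  have hint : Integrable (fun ω => (∑ i ∈ Finset.Ico n m, ξ i ω * ε (i + 1) ω) ^ 2 * g ω) μ :=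
    ((memLp_two_iff_integrable_sq (hε.memLp_sum hξ hξ2 _).1).1 (hε.memLp_sum hξ hξ2 _)).mul_bdd
      hgm (ae_of_all _ hgC)
  simp_rw [hIco]
  rw [← ofReal_integral_eq_lintegral_ofReal hint
    (ae_of_all _ fun ω => mul_nonneg (sq_nonneg _) (hg0 ω))]
  refine ENNReal.ofReal_le_ofReal ((hε.integral_sq_sum_mul_le hξ hξ2 hζ hdom hg hg0 hgC m).trans ?_)
  exact mul_le_mul_of_nonneg_right (sum_Ico_le_tsum_add ha (fun i => sq_nonneg _) n m)
    (integral_nonneg fun ω => mul_nonneg (sq_nonneg _) (hg0 ω))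

theorem lintegral_sq_tail_div_le (hε : IsStandardMartingaleDifference ℱ ε μ)
    (hξ : StronglyAdapted ℱ ξ) (hξ2 : ∀ i, MemLp (ξ i) 2 μ) {n : ℕ} {ζ : Ω → ℝ} {a : ℕ → ℝ}
    (ha : Summable fun i => a i ^ 2) (hζm : StronglyMeasurable[ℱ n] ζ) (hζ : MemLp ζ 2 μ)
    (hdom : ∀ i ≥ n, ∀ᵐ ω ∂μ, |ξ i ω| ≤ ζ ω * a i) {L : Ω → ℝ} (hLm : AEMeasurable L μ)
    (hL : ∀ᵐ ω ∂μ, Tendsto (fun m => ∑ i ∈ Finset.range m, ξ i ω * ε (i + 1) ω) atTop (𝓝 (L ω))) :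
    ∫⁻ ω, ENNReal.ofReal (((L ω - ∑ i ∈ Finset.range n, ξ i ω * ε (i + 1) ω) /
      (ζ ω * √(∑' i, a (n + i) ^ 2))) ^ 2) ∂μ ≤ μ Set.univ := by
  set A := ∑' i, a (n + i) ^ 2
  set T : Ω → ℝ := fun ω => L ω - ∑ i ∈ Finset.range n, ξ i ω * ε (i + 1) ω
  set w : Ω → ℝ := fun ω => ((ζ ω * √A) ^ 2)⁻¹
  have hζA : StronglyMeasurable[ℱ n] fun ω => ζ ω * √A := hζm.mul stronglyMeasurable_const
  have hwm : ∀ M : ℕ, StronglyMeasurable[ℱ n] fun ω => min (w ω) M := fun M =>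
    ((hζA.measurable.pow_const 2).inv.min measurable_const).stronglyMeasurable
  have hw0 : ∀ (M : ℕ) ω, 0 ≤ min (w ω) M := fun M ω => le_min (by positivity) M.cast_nonneg
  have hA : 0 ≤ A := tsum_nonneg fun i => sq_nonneg _
  -- `w` need not be bounded, so we pass to the limit in its truncations `min w M`
  have htrunc : ∀ M : ℕ, ∫⁻ ω, ENNReal.ofReal (T ω ^ 2 * min (w ω) M) ∂μ ≤ μ Set.univ := by
    intro M
    refine (hε.lintegral_sq_tail_mul_le hξ hξ2 ha hζ hdom hL (hwm M) (hw0 M) fun ω =>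
      (Real.norm_of_nonneg (hw0 M ω)).trans_le (min_le_right _ _)).trans
      (ENNReal.ofReal_le_of_le_toReal ?_)
    calc A * ∫ ω, ζ ω ^ 2 * min (w ω) M ∂μ
        = ∫ ω, (ζ ω * √A) ^ 2 * min (w ω) M ∂μ := by
          rw [← integral_const_mul]
          congr 1 with ω
          rw [mul_pow, Real.sq_sqrt hA]
          ring
      _ ≤ (μ Set.univ).toReal := integral_sq_mul_min_inv_sq_le _ M
  have hTm : AEMeasurable T μ := hLm.sub (hε.memLp_sum hξ hξ2 _).1.aemeasurable
  refine lintegral_ofReal_le_of_tendsto (F := fun M ω => T ω ^ 2 * min (w ω) M)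
    (fun M => (hTm.pow_const 2).mul ((hwm M).mono (ℱ.le n)).measurable.aemeasurable)
    (ae_of_all _ fun ω => ?_) (.of_forall htrunc)
  rw [div_pow, div_eq_mul_inv]
  refine tendsto_const_nhds.congr' ?_
  filter_upwards [eventually_ge_atTop ⌈w ω⌉₊] with M hM
  rw [min_eq_left ((Nat.le_ceil _).trans (Nat.cast_le.2 hM))]

end IsStandardMartingaleDifference

end Noise

theorem stmt14_general {Ω : Type*} {m0 : MeasurableSpace Ω} {μ : Measure Ω}
    [IsProbabilityMeasure μ] (ℱ : Filtration ℕ m0)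
    (ξ ε ζ : ℕ → Ω → ℝ) (a : ℕ → ℝ)
    (hξ : ∀ n, StronglyMeasurable[ℱ n] (ξ n))
    (hεadapted : ∀ n, StronglyMeasurable[ℱ n] (ε n))
    (hεint : ∀ n, Integrable (ε (n + 1)) μ)
    (hεint2 : ∀ n, Integrable (fun ω => (ε (n + 1) ω) ^ 2) μ)
    (hεmean : ∀ n, μ[ε (n + 1) | ℱ n] =ᵐ[μ] fun _ => (0 : ℝ))
    (hεvar : ∀ n, μ[fun ω => (ε (n + 1) ω) ^ 2 | ℱ n] =ᵐ[μ] fun _ => (1 : ℝ))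
    (hζmeas : ∀ n, StronglyMeasurable[ℱ n] (ζ n))
    (hζL2 : ∀ n, Integrable (fun ω => (ζ n ω) ^ 2) μ)
    (ha : Summable (fun n => (a n) ^ 2))
    (hdom : ∀ n, ∀ i ≥ n, ∀ᵐ ω ∂μ, |ξ i ω| ≤ ζ n ω * a i) :
    ∀ᵐ ω ∂μ, ∃ l : ℝ,
      Tendsto (fun m => ∑ i ∈ Finset.range m, ξ i ω * ε (i + 1) ω) atTop (nhds l) ∧
      ∃ C : ℝ, ∃ᶠ n in atTop,
        (l - ∑ i ∈ Finset.range n, ξ i ω * ε (i + 1) ω) /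
          (ζ n ω * Real.sqrt (∑' i : ℕ, (a (n + i)) ^ 2)) ≤ C := by
  have hε : IsStandardMartingaleDifference ℱ ε μ := ⟨hεadapted, hεint, hεint2, hεmean, hεvar⟩
  have hζ : ∀ n, MemLp (ζ n) 2 μ := fun n =>
    (memLp_two_iff_integrable_sq ((hζmeas n).mono (ℱ.le n)).aestronglyMeasurable).2 (hζL2 n)
  have hξ2 : ∀ i, MemLp (ξ i) 2 μ := fun i =>
    ((hζ i).mul_const (a i)).of_le ((hξ i).mono (ℱ.le i)).aestronglyMeasurable <|
      (hdom i i le_rfl).mono fun ω h => by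
        simpa only [Real.norm_eq_abs] using h.trans (le_abs_self _)
  set S : ℕ → Ω → ℝ := fun m ω => ∑ i ∈ Finset.range m, ξ i ω * ε (i + 1) ω
  set L := ℱ.limitProcess S μ
  have hL : ∀ᵐ ω ∂μ, Tendsto (fun m => S m ω) atTop (𝓝 (L ω)) :=
    hε.ae_tendsto_limitProcess_sum hξ hξ2 ha (hζ 0) fun i => hdom 0 i i.zero_le
  have hLm : AEMeasurable L μ :=
    Filtration.stronglyMeasurable_limit_process'.measurable.aemeasurable
  have htail : ∀ n, ∫⁻ ω, ENNReal.ofReal (((L ω - S n ω) /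
      (ζ n ω * √(∑' i, a (n + i) ^ 2))) ^ 2) ∂μ ≤ μ Set.univ := fun n =>
    hε.lintegral_sq_tail_div_le hξ hξ2 ha (hζmeas n) (hζ n) (hdom n) hLm hL
  have hX : ∀ n, AEMeasurable (fun ω => (L ω - S n ω) / (ζ n ω * √(∑' i, a (n + i) ^ 2))) μ :=
    fun n => (hLm.sub (hε.memLp_sum hξ hξ2 _).1.aemeasurable).div
      ((hζ n).1.aemeasurable.mul_const _)
  filter_upwards [hL, ae_exists_frequently_le_of_lintegral_sq_le hX (measure_ne_top μ _) htail]
    with ω hω ⟨C, hC⟩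
  exact ⟨L ω, hω, C, hC⟩

/-- if |ξ_i| ≤ ζ_n a_i a.s. for i ≥ n with ζ_n positive, F_n-measurable,
square-integrable and (a_n) square-summable, then a.s. ∑ ξ_i ε_{i+1} converges and
liminf_n (ζ_n √A_n)^{-1} ∑_{i≥n} ξ_i ε_{i+1} < ∞, where A_n = ∑_{i≥n} a_i². -/
theorem stmt14 {Ω : Type*} {m0 : MeasurableSpace Ω} {μ : Measure Ω}
    [IsProbabilityMeasure μ] (ℱ : Filtration ℕ m0)
    (ξ ε ζ : ℕ → Ω → ℝ) (a : ℕ → ℝ)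
    (hξ : ∀ n, StronglyMeasurable[ℱ n] (ξ n))
    (hεadapted : ∀ n, StronglyMeasurable[ℱ n] (ε n))
    (hεint : ∀ n, Integrable (ε (n + 1)) μ)
    (hεint2 : ∀ n, Integrable (fun ω => (ε (n + 1) ω) ^ 2) μ)
    (hεmean : ∀ n, μ[ε (n + 1) | ℱ n] =ᵐ[μ] fun _ => (0 : ℝ))
    (hεvar : ∀ n, μ[fun ω => (ε (n + 1) ω) ^ 2 | ℱ n] =ᵐ[μ] fun _ => (1 : ℝ))
    (hζmeas : ∀ n, StronglyMeasurable[ℱ n] (ζ n))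
    (hζpos : ∀ n, ∀ᵐ ω ∂μ, 0 < ζ n ω)
    (hζL2 : ∀ n, Integrable (fun ω => (ζ n ω) ^ 2) μ)
    (ha : Summable (fun n => (a n) ^ 2))
    (hdom : ∀ n, ∀ i ≥ n, ∀ᵐ ω ∂μ, |ξ i ω| ≤ ζ n ω * a i) :
    ∀ᵐ ω ∂μ, ∃ l : ℝ,
      Tendsto (fun m => ∑ i ∈ Finset.range m, ξ i ω * ε (i + 1) ω) atTop (nhds l) ∧
      ∃ C : ℝ, ∃ᶠ n in atTop,
        (l - ∑ i ∈ Finset.range n, ξ i ω * ε (i + 1) ω) /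
          (ζ n ω * Real.sqrt (∑' i : ℕ, (a (n + i)) ^ 2)) ≤ C :=
  stmt14_general ℱ ξ ε ζ a hξ hεadapted hεint hεint2 hεmean hεvar hζmeas hζL2 ha hdom
end

section
/- Let α > 1, τ₀ ≥ 3 integer, σ_n ≥ 1, τ_n = τ₀ + ∑_{i≤n}σ_i, and set δ_n = 1/log²τ_n. If the sequence ρ_n = σ_{n+1}/τ_n is either bounded or tends to infinity, then ∑_{n≥0} δ_n σ_{n+1}/τ_{n+1} < ∞. -/
open Filter Real

/-! Write `L n = log τ n`. Since `σ n / τ (n + 1) ≤ L (n + 1) - L n ≤ σ n / τ n`, a bounded ratio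
keeps `L (n + 1) / L n` bounded, and the terms are then dominated by a multiple of the telescoping
differences `1 / L n - 1 / L (n + 1)`. A ratio tending to infinity makes `τ` at least double at
each step from some point on, so `L n` grows linearly and the terms, which are at most
`1 / L n ^ 2`, are dominated by a multiple of `1 / n ^ 2`. -/

lemma div_add_le_log_add_sub_log {t s : ℝ} (ht : 0 < t) (hs : 0 ≤ s) :
    s / (t + s) ≤ log (t + s) - log t := by
  have h := one_sub_inv_le_log_of_pos (x := (t + s) / t) (by positivity)
  rwa [log_div (by positivity) ht.ne', inv_div, one_sub_div (by positivity), add_sub_cancel_left]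
    at h

lemma log_add_sub_log_le {t s : ℝ} (ht : 0 < t) (hs : 0 ≤ s) :
    log (t + s) - log t ≤ s / t := by
  have h := log_le_sub_one_of_pos (x := (t + s) / t) (by positivity)
  rwa [log_div (by positivity) ht.ne', div_sub_one ht.ne', add_sub_cancel_left] at h

lemma summable_of_le_mul_sub_succ {f a : ℕ → ℝ} {K : ℝ} (hf : ∀ n, 0 ≤ f n) (ha : ∀ n, 0 ≤ a n)
    (hK : 0 ≤ K) (h : ∀ n, f n ≤ K * (a n - a (n + 1))) : Summable f := by
  refine summable_of_sum_range_le hf (c := K * a 0) fun N => ?_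
  calc ∑ i ∈ Finset.range N, f i
      ≤ ∑ i ∈ Finset.range N, K * (a i - a (i + 1)) := Finset.sum_le_sum fun i _ => h i
    _ = K * (a 0 - a N) := by rw [← Finset.mul_sum, Finset.sum_range_sub']
    _ ≤ K * a 0 := by nlinarith [ha N]

lemma summable_one_div_sq_of_add_le {a : ℕ → ℝ} {c : ℝ} (hc : 0 < c) (ha0 : 0 < a 0)
    (ha : ∀ n, a n + c ≤ a (n + 1)) : Summable fun n => 1 / a n ^ 2 := by
  set b := min (a 0) c
  have hb : 0 < b := lt_min ha0 hc
  have hlin : ∀ n : ℕ, b * (n + 1) ≤ a n := by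
    intro n
    induction n with
    | zero => rw [Nat.cast_zero, zero_add, mul_one]; exact min_le_left _ _
    | succ k ih => push_cast; nlinarith [ha k, min_le_right (a 0) c]
  have hsq : Summable fun n : ℕ => 1 / ((n : ℝ) + 1) ^ 2 := by
    simpa using (summable_nat_add_iff 1).mpr (summable_one_div_nat_pow.mpr one_lt_two)
  refine (hsq.mul_left (1 / b ^ 2)).of_nonneg_of_le (fun n => by positivity) fun n => ?_
  calc 1 / a n ^ 2 ≤ 1 / (b * (n + 1)) ^ 2 := by gcongr; exact hlin n
    _ = 1 / b ^ 2 * (1 / ((n : ℝ) + 1) ^ 2) := by rw [mul_pow, one_div_mul_one_div]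

/-- The constant comes from `log (t + s) - log t ≤ s / t ≤ C ≤ (C / l) log t`. -/
lemma div_log_sq_le_of_div_le {t s C l : ℝ} (ht : 0 < t) (hs : 0 ≤ s) (hl : 0 < l)
    (hlt : l ≤ log t) (hC : s / t ≤ C) :
    1 / log t ^ 2 * s / (t + s) ≤ (1 + C / l) * (1 / log t - 1 / log (t + s)) := by
  set L := log t
  set L' := log (t + s)
  have hL : 0 < L := hl.trans_le hlt
  have hlow := div_add_le_log_add_sub_log ht hs
  have hd : 0 ≤ L' - L := (by positivity : 0 ≤ s / (t + s)).trans hlow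
  have hL' : 0 < L' := by linarith
  have hup : L' ≤ (1 + C / l) * L := by
    have hCl : C ≤ C / l * L := by
      rw [div_mul_eq_mul_div, le_div_iff₀ hl]
      exact mul_le_mul_of_nonneg_left hlt ((div_nonneg hs ht.le).trans hC)
    linarith [log_add_sub_log_le ht hs]
  calc 1 / L ^ 2 * s / (t + s) = s / (t + s) / L ^ 2 := by ring
    _ ≤ (L' - L) / L ^ 2 := by gcongr
    _ = (1 / L - 1 / L') * (L' / L) := by field_simp
    _ ≤ (1 / L - 1 / L') * (1 + C / l) := by
        gcongr
        · rw [sub_nonneg]; gcongr; linarith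
        · rwa [div_le_iff₀ hL]
    _ = (1 + C / l) * (1 / L - 1 / L') := mul_comm _ _

section

variable {τ σ : ℕ → ℝ}

lemma le_of_succ_eq_add (hτ : ∀ n, τ (n + 1) = τ n + σ n) (hσ : ∀ n, 0 ≤ σ n) (n : ℕ) :
    τ 0 ≤ τ n :=
  monotone_nat_of_le_succ (fun n => by linarith [hτ n, hσ n]) (Nat.zero_le n)

theorem summable_div_log_sq_of_bddAbove_div (hτ : ∀ n, τ (n + 1) = τ n + σ n)
    (hσ : ∀ n, 0 ≤ σ n) (hτ0 : 1 < τ 0) {C : ℝ} (hC : ∀ n, σ n / τ n ≤ C) :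
    Summable fun n => 1 / log (τ n) ^ 2 * σ n / τ (n + 1) := by
  have hpos : ∀ n, 0 < τ n := fun n => by linarith [le_of_succ_eq_add hτ hσ n]
  have hl : 0 < log (τ 0) := log_pos hτ0
  have hlog : ∀ n, log (τ 0) ≤ log (τ n) :=
    fun n => log_le_log (hpos 0) (le_of_succ_eq_add hτ hσ n)
  have hlog_pos : ∀ n, 0 < log (τ n) := fun n => hl.trans_le (hlog n)
  refine summable_of_le_mul_sub_succ (a := fun n => 1 / log (τ n)) (K := 1 + C / log (τ 0))
    (fun n => ?_) (fun n => (one_div_pos.mpr (hlog_pos n)).le) ?_ (fun n => ?_)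
  · have := hpos (n + 1); have := hσ n; have := hlog_pos n; positivity
  · have : 0 ≤ C := (div_nonneg (hσ 0) (hpos 0).le).trans (hC 0)
    exact add_nonneg zero_le_one (div_nonneg this hl.le)
  · rw [hτ n]
    exact div_log_sq_le_of_div_le (hpos n) (hσ n) hl (hlog n) (hC n)

theorem summable_div_log_sq_of_tendsto_div (hτ : ∀ n, τ (n + 1) = τ n + σ n)
    (hσ : ∀ n, 0 ≤ σ n) (hτ0 : 1 < τ 0) (hρ : Tendsto (fun n => σ n / τ n) atTop atTop) :
    Summable fun n => 1 / log (τ n) ^ 2 * σ n / τ (n + 1) := by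
  have hpos : ∀ n, 0 < τ n := fun n => by linarith [le_of_succ_eq_add hτ hσ n]
  obtain ⟨m, hm⟩ := (hρ.eventually_ge_atTop 1).exists_forall_of_atTop
  have hstep : ∀ n, log (τ (n + m)) + log 2 ≤ log (τ (n + 1 + m)) := by
    intro n
    have hle : τ (n + m) ≤ σ (n + m) := (one_le_div (hpos _)).mp (hm _ (Nat.le_add_left m n))
    rw [← log_mul (hpos _).ne' two_ne_zero, add_right_comm, hτ]
    exact log_le_log (by linarith [hpos (n + m)]) (by linarith)
  have hsum : Summable fun n => 1 / log (τ n) ^ 2 :=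
    (summable_nat_add_iff m).mp <| summable_one_div_sq_of_add_le (log_pos one_lt_two)
      (by simpa using log_pos (hτ0.trans_le (le_of_succ_eq_add hτ hσ m))) hstep
  refine hsum.of_nonneg_of_le (fun n => ?_) fun n => ?_
  · have := hpos (n + 1); have := hσ n; positivity
  · rw [mul_div_assoc]
    refine mul_le_of_le_one_right (by positivity) (div_le_one_of_le₀ ?_ (hpos _).le)
    linarith [hτ n, hpos n]

end

theorem stmt19_general (τ0 : ℕ) (hτ0 : 3 ≤ τ0) (σ : ℕ → ℕ)
    (hρ : (∃ C : ℝ, ∀ n, (σ n : ℝ) / ((τ0 + ∑ i ∈ Finset.range n, σ i : ℕ) : ℝ) ≤ C) ∨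
      Tendsto (fun n => (σ n : ℝ) / ((τ0 + ∑ i ∈ Finset.range n, σ i : ℕ) : ℝ))
        atTop atTop) :
    Summable (fun n =>
      (1 / (Real.log ((τ0 + ∑ i ∈ Finset.range n, σ i : ℕ) : ℝ)) ^ 2) *
        (σ n : ℝ) / ((τ0 + ∑ i ∈ Finset.range (n + 1), σ i : ℕ) : ℝ)) := by
  have hτ : ∀ n, ((τ0 + ∑ i ∈ Finset.range (n + 1), σ i : ℕ) : ℝ) =
      ((τ0 + ∑ i ∈ Finset.range n, σ i : ℕ) : ℝ) + σ n := by
    intro n; push_cast [Finset.sum_range_succ]; ring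
  have hτ0' : (1 : ℝ) < ((τ0 + ∑ i ∈ Finset.range 0, σ i : ℕ) : ℝ) := by
    simp only [Finset.range_zero, Finset.sum_empty, add_zero, Nat.one_lt_cast]; omega
  rcases hρ with ⟨C, hC⟩ | hρ
  · exact summable_div_log_sq_of_bddAbove_div hτ (fun n => Nat.cast_nonneg _) hτ0' hC
  · exact summable_div_log_sq_of_tendsto_div hτ (fun n => Nat.cast_nonneg _) hτ0' hρ

/-- with δ_n = 1/log²τ_n, if ρ_n = σ_{n+1}/τ_n is bounded or tends
to infinity, then ∑ δ_n σ_{n+1}/τ_{n+1} < ∞.  (Here `σ n` denotes σ_{n+1}.) -/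
theorem stmt19 (τ0 : ℕ) (hτ0 : 3 ≤ τ0) (σ : ℕ → ℕ) (hσ : ∀ n, 1 ≤ σ n)
    (hρ : (∃ C : ℝ, ∀ n, (σ n : ℝ) / ((τ0 + ∑ i ∈ Finset.range n, σ i : ℕ) : ℝ) ≤ C) ∨
      Tendsto (fun n => (σ n : ℝ) / ((τ0 + ∑ i ∈ Finset.range n, σ i : ℕ) : ℝ))
        atTop atTop) :
    Summable (fun n =>
      (1 / (Real.log ((τ0 + ∑ i ∈ Finset.range n, σ i : ℕ) : ℝ)) ^ 2) *
        (σ n : ℝ) / ((τ0 + ∑ i ∈ Finset.range (n + 1), σ i : ℕ) : ℝ)) :=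
  stmt19_general τ0 hτ0 σ hρ
end
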